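/- arXiv:1209.4014 — 6 statements merged into one kernel-verified Lean document; each statement's English description precedes it below -/
import Mathlib

section
/- Let μ be a finite Borel measure on ℂ whose topological support is contained in the closed ball of radius R > 0 centered at 0, and let u ∈ ℂ with ‖u‖·R < 1. Then the series Σ_{j=0}^∞ ((j+1)(j+2)/2)·u^j·∫_ℂ z^j dμ(z) converges (HasSum) with sum ∫_ℂ (1 − u·z)⁻³ dμ(z). -/
open MeasureTheory

lemma choose_cast_aux (j : ℕ) : (((j : ℂ) + 1) * ((j : ℂ) + 2) / 2) = ((j + 2).choose 2 : ℂ) := by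
  rw [Nat.cast_choose_two]
  push_cast
  ring

/-- If `μ` is a finite Borel measure on `ℂ` whose topological support is
contained in the closed ball of radius `R > 0` centered at `0` (equivalently, the complement
of that closed ball is `μ`-null), and `u : ℂ` satisfies `‖u‖ * R < 1`, then the series
`Σ_j ((j+1)(j+2)/2) u^j ∫ z^j dμ` converges with sum `∫ (1 - u z)⁻³ dμ`. -/
theorem hasSum_moment_generating_function
    (μ : Measure ℂ) [IsFiniteMeasure μ] (R : ℝ) (hR : 0 < R)
    (hsupp : μ (Metric.closedBall (0 : ℂ) R)ᶜ = 0)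
    (u : ℂ) (hu : ‖u‖ * R < 1) :
    HasSum
      (fun j : ℕ => (((j : ℂ) + 1) * ((j : ℂ) + 2) / 2) * u ^ j * ∫ z : ℂ, z ^ j ∂μ)
      (∫ z : ℂ, ((1 - u * z) ^ 3)⁻¹ ∂μ) := by
  have hae : ∀ᵐ z ∂μ, ‖z‖ ≤ R := by
    rw [ae_iff]
    convert hsupp using 2
    ext z
    simp [Metric.mem_closedBall, dist_eq_norm, not_le]
  set F : ℕ → ℂ → ℂ := fun j z => (((j : ℂ) + 1) * ((j : ℂ) + 2) / 2) * u ^ j * z ^ j with hF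
  set C : ℕ → ℝ := fun j => ((j + 2).choose 2 : ℝ) * (‖u‖ * R) ^ j with hC
  have hbound : ∀ j : ℕ, ∀ᵐ z ∂μ, ‖F j z‖ ≤ C j := by
    intro j
    filter_upwards [hae] with z hz
    have h1 : ‖F j z‖ = ((j + 2).choose 2 : ℝ) * (‖u‖ ^ j * ‖z‖ ^ j) := by
      rw [hF]
      simp only
      rw [choose_cast_aux]
      simp [norm_mul, mul_assoc]
    rw [h1, hC]
    simp only
    rw [mul_pow]
    gcongr
  have hmeas : ∀ j : ℕ, AEStronglyMeasurable (F j) μ := fun j =>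
    (Continuous.aestronglyMeasurable (by continuity))
  have hF_int : ∀ j : ℕ, Integrable (F j) μ :=
    fun j => Integrable.mono' (integrable_const (C j)) (hmeas j) (hbound j)
  have huR : |‖u‖ * R| < 1 := by
    rw [abs_of_nonneg (mul_nonneg (norm_nonneg u) hR.le)]; exact hu
  have hCsum : Summable C := by
    have := summable_choose_mul_geometric_of_norm_lt_one (R := ℝ) 2 (r := ‖u‖ * R)
      (by rwa [Real.norm_eq_abs])
    exact this
  have hF_sum : Summable fun j => ∫ z, ‖F j z‖ ∂μ := by
    refine Summable.of_nonneg_of_le (fun j => integral_nonneg fun z => norm_nonneg _)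
      (fun j => ?_) (hCsum.mul_right ((μ Set.univ).toReal))
    calc ∫ z, ‖F j z‖ ∂μ ≤ ∫ _, C j ∂μ :=
          integral_mono_ae (hF_int j).norm (integrable_const _) (hbound j)
      _ = C j * (μ Set.univ).toReal := by simp [mul_comm, Measure.real]
  have key := hasSum_integral_of_summable_integral_norm (μ := μ) hF_int hF_sum
  have heq1 : (fun j => ∫ z, F j z ∂μ) =
      fun j : ℕ => (((j : ℂ) + 1) * ((j : ℂ) + 2) / 2) * u ^ j * ∫ z : ℂ, z ^ j ∂μ := by
    funext j
    rw [hF]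
    simp only
    rw [integral_const_mul]
  have heq2 : ∫ z, (∑' j, F j z) ∂μ = ∫ z : ℂ, ((1 - u * z) ^ 3)⁻¹ ∂μ := by
    apply integral_congr_ae
    filter_upwards [hae] with z hz
    have hr : ‖u * z‖ < 1 := by
      calc ‖u * z‖ ≤ ‖u‖ * ‖z‖ := norm_mul_le u z
        _ ≤ ‖u‖ * R := by gcongr
        _ < 1 := hu
    have hs := hasSum_choose_mul_geometric_of_norm_lt_one (𝕜 := ℂ) 2 hr
    have heqF : (fun j : ℕ => ((j + 2).choose 2 : ℂ) * (u * z) ^ j) = fun j => F j z := by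
      funext j
      rw [hF, ← choose_cast_aux, mul_pow]
      ring
    rw [heqF] at hs
    rw [hs.tsum_eq]
    norm_num
  rw [heq1, heq2] at key
  exact key
end

section
/- Let a, b, c ∈ ℂ and let u ∈ ℂ be such that 1 − u·z ≠ 0 for every z in the triangle Δ = convexHull ℝ {a,b,c}. Then ∫_Δ (1 − u·z)⁻³ dvolume(z) = Area(Δ) / ((1 − a·u)(1 − b·u)(1 − c·u)), where Area(Δ) = (volume Δ).toReal. -/
open MeasureTheory Set Complex intervalIntegral

lemma stdTriangle_eq :
    convexHull ℝ ({0, 1, Complex.I} : Set ℂ)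
      = {w : ℂ | 0 ≤ w.re ∧ 0 ≤ w.im ∧ w.re + w.im ≤ 1} := by
  apply Subset.antisymm
  · apply convexHull_min
    · rintro z (rfl | rfl | rfl) <;> norm_num
    · have h1 : Convex ℝ {w : ℂ | 0 ≤ w.re} :=
        convex_halfSpace_ge Complex.reLm.isLinear 0
      have h2 : Convex ℝ {w : ℂ | 0 ≤ w.im} :=
        convex_halfSpace_ge Complex.imLm.isLinear 0
      have h3 : Convex ℝ {w : ℂ | w.re + w.im ≤ 1} :=
        convex_halfSpace_le (Complex.reLm + Complex.imLm).isLinear 1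
      have := (h1.inter h2).inter h3
      convert this using 1
      ext w; simp [and_assoc]
      ext w; simp [and_assoc]
  · rintro w ⟨hs, ht, hst⟩
    set s := w.re
    set t := w.im
    have hc := convex_convexHull ℝ ({0, 1, Complex.I} : Set ℂ)
    have h0m : (0:ℂ) ∈ convexHull ℝ ({0, 1, Complex.I} : Set ℂ) :=
      subset_convexHull ℝ _ (by norm_num)
    have h1m : (1:ℂ) ∈ convexHull ℝ ({0, 1, Complex.I} : Set ℂ) :=
      subset_convexHull ℝ _ (by norm_num)
    have hIm : Complex.I ∈ convexHull ℝ ({0, 1, Complex.I} : Set ℂ) :=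
      subset_convexHull ℝ _ (by norm_num)
    rcases eq_or_lt_of_le (by positivity : (0:ℝ) ≤ s + t) with h0 | h0
    · have hs0 : s = 0 := by linarith
      have ht0 : t = 0 := by linarith
      have : w = 0 := Complex.ext hs0 ht0
      rw [this]; exact h0m
    · set r := s + t with hr
      have hxm : (s/r) • (1:ℂ) + (t/r) • Complex.I
          ∈ convexHull ℝ ({0, 1, Complex.I} : Set ℂ) := by
        apply hc.segment_subset h1m hIm
        rw [segment_eq_image₂]
        exact ⟨(s/r, t/r), ⟨by positivity, by positivity, by dsimp only; field_simp; exact hr.symm⟩, rfl⟩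
      have hwm : w ∈ segment ℝ (0:ℂ) ((s/r) • (1:ℂ) + (t/r) • Complex.I) := by
        rw [segment_eq_image₂]
        refine ⟨(1 - r, r), ⟨by dsimp only; linarith, by dsimp only; linarith,
          by dsimp only; ring⟩, ?_⟩
        show (1 - r) • (0:ℂ) + r • ((s/r) • (1:ℂ) + (t/r) • Complex.I) = w
        rw [smul_zero, zero_add, smul_add, smul_smul, smul_smul]
        rw [mul_div_cancel₀ _ (ne_of_gt h0), mul_div_cancel₀ _ (ne_of_gt h0)]
        rw [Complex.real_smul, Complex.real_smul, mul_one]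
        exact Complex.re_add_im w
      exact hc.segment_subset h0m hxm hwm

lemma cx_hasDerivAt (C Q : ℂ) (m : ℕ) (z : ℂ) (h : C + z * Q ≠ 0) (c : ℂ) :
    HasDerivAt (fun z : ℂ => c * ((C + z * Q)^m)⁻¹)
      (c * (-((m:ℂ) * (C + z * Q)^(m-1) * Q) / ((C + z * Q)^m)^2)) z := by
  have h1 : HasDerivAt (fun z : ℂ => C + z * Q) Q z := by
    simpa using ((hasDerivAt_id z).mul_const Q).const_add C
  exact ((h1.pow m).inv (pow_ne_zero _ h)).const_mul c

lemma ftc_cube (C Q : ℂ) (hQ : Q ≠ 0) (L : ℝ)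
    (hne : ∀ t ∈ Set.uIcc (0:ℝ) L, C + (t:ℂ) * Q ≠ 0) :
    ∫ t in (0:ℝ)..L, ((C + (t:ℂ) * Q)^3)⁻¹
      = -(2*Q)⁻¹ * (((C + (L:ℂ)*Q)^2)⁻¹ - (C^2)⁻¹) := by
  have hc : ContinuousOn (fun t : ℝ => ((C + (t:ℂ) * Q)^3)⁻¹) (Set.uIcc 0 L) := by
    apply ContinuousOn.inv₀
    · fun_prop
    · exact fun t ht => pow_ne_zero _ (hne t ht)
  have key := integral_eq_sub_of_hasDerivAt
    (f := fun t : ℝ => -(2*Q)⁻¹ * ((C + (t:ℂ) * Q)^2)⁻¹)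
    (f' := fun t : ℝ => ((C + (t:ℂ) * Q)^3)⁻¹)
    (a := 0) (b := L) ?_ (hc.intervalIntegrable)
  · rw [key]
    push_cast
    ring
  · intro t ht
    have hz := hne t ht
    have h1 := (cx_hasDerivAt C Q 2 (t:ℂ) hz (-(2*Q)⁻¹)).comp_ofReal
    convert h1 using 1
    · rfl
    have hz2 : C + (t:ℂ) * Q ≠ 0 := hz
    field_simp
    ring

lemma ftc_sq (D R : ℂ) (hR : R ≠ 0)
    (hne : ∀ s ∈ Set.uIcc (0:ℝ) 1, D + (s:ℂ) * R ≠ 0) :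
    ∫ s in (0:ℝ)..1, ((D + (s:ℂ) * R)^2)⁻¹
      = -R⁻¹ * ((D + R)⁻¹ - D⁻¹) := by
  have hc : ContinuousOn (fun s : ℝ => ((D + (s:ℂ) * R)^2)⁻¹) (Set.uIcc 0 1) := by
    apply ContinuousOn.inv₀
    · fun_prop
    · exact fun s hs => pow_ne_zero _ (hne s hs)
  have key := integral_eq_sub_of_hasDerivAt
    (f := fun s : ℝ => -R⁻¹ * ((D + (s:ℂ) * R)^1)⁻¹)
    (f' := fun s : ℝ => ((D + (s:ℂ) * R)^2)⁻¹)
    (a := 0) (b := 1) ?_ (hc.intervalIntegrable)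
  · rw [key]
    push_cast
    ring_nf
  · intro s hs
    have hz := hne s hs
    have h1 := (cx_hasDerivAt D R 1 (s:ℂ) hz (-R⁻¹)).comp_ofReal
    convert h1 using 1
    · rfl
    have hz2 : D + (s:ℂ) * R ≠ 0 := hz
    field_simp
    simp

lemma core_lemma (A P Q : ℂ) (hP : P ≠ 0) (hQ : Q ≠ 0) (hPQ : P - Q ≠ 0)
    (hne : ∀ x y : ℝ, 0 ≤ x → 0 ≤ y → x + y ≤ 1 →
      A + (x:ℂ) * P + (y:ℂ) * Q ≠ 0) :
    ∫ p in {p : ℝ × ℝ | 0 ≤ p.1 ∧ 0 ≤ p.2 ∧ p.1 + p.2 ≤ 1},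
        ((A + (p.1:ℂ) * P + (p.2:ℂ) * Q)^3)⁻¹
      = (2 * A * (A + P) * (A + Q))⁻¹ := by
  set T : Set (ℝ × ℝ) := {p : ℝ × ℝ | 0 ≤ p.1 ∧ 0 ≤ p.2 ∧ p.1 + p.2 ≤ 1} with hT
  set F : ℝ × ℝ → ℂ := fun p => ((A + (p.1:ℂ) * P + (p.2:ℂ) * Q)^3)⁻¹ with hF
  have hA : A ≠ 0 := by simpa using hne 0 0 le_rfl le_rfl (by norm_num)
  have hAP : A + P ≠ 0 := by simpa using hne 1 0 zero_le_one le_rfl (by norm_num)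
  have hAQ : A + Q ≠ 0 := by simpa using hne 0 1 le_rfl zero_le_one (by norm_num)
  have hTclosed : IsClosed T := by
    have : T = {p : ℝ × ℝ | 0 ≤ p.1} ∩ ({p : ℝ × ℝ | 0 ≤ p.2}
        ∩ {p : ℝ × ℝ | p.1 + p.2 ≤ 1}) := by
      ext p; simp [hT, and_assoc]
    rw [this]
    exact (isClosed_le continuous_const continuous_fst).inter
      ((isClosed_le continuous_const continuous_snd).inter
        (isClosed_le (continuous_fst.add continuous_snd) continuous_const))
  have hTmeas : MeasurableSet T := hTclosed.measurableSet
  have hTcpt : IsCompact T := by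
    refine (isCompact_Icc (a := ((0:ℝ),(0:ℝ))) (b := (1,1))).of_isClosed_subset hTclosed ?_
    · rintro ⟨x, y⟩ ⟨h1, h2, h3⟩
      simp only [mem_Icc, Prod.le_def] at *
      refine ⟨⟨h1, h2⟩, ⟨by linarith, by linarith⟩⟩
  have hcont : ContinuousOn F T := by
    apply ContinuousOn.inv₀
    · fun_prop
    · rintro ⟨x, y⟩ ⟨h1, h2, h3⟩
      exact pow_ne_zero _ (hne x y h1 h2 h3)
  have hint : IntegrableOn F T := hcont.integrableOn_compact hTcpt
  have hInd : Integrable (T.indicator F) (volume.prod volume) := by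
    rw [← Measure.volume_eq_prod]; exact hint.integrable_indicator hTmeas
  rw [← MeasureTheory.integral_indicator hTmeas, Measure.volume_eq_prod, integral_prod _ hInd]
  have h1 : ∀ x : ℝ, (∫ y, T.indicator F (x, y))
      = (Icc (0:ℝ) 1).indicator (fun x => ∫ y in Icc 0 (1-x), F (x, y)) x := by
    intro x
    by_cases hx0 : 0 ≤ x
    · by_cases hx1 : x ≤ 1
      · rw [indicator_of_mem (mem_Icc.2 ⟨hx0, hx1⟩), ← MeasureTheory.integral_indicator measurableSet_Icc]
        congr 1
        funext y
        have hiff : (x, y) ∈ T ↔ y ∈ Icc (0:ℝ) (1-x) := by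
          simp only [hT, mem_setOf_eq, mem_Icc]
          constructor
          · rintro ⟨-, h2, h3⟩; exact ⟨h2, by linarith⟩
          · rintro ⟨h2, h3⟩; exact ⟨hx0, h2, by linarith⟩
        rw [Set.indicator_apply, Set.indicator_apply, if_congr hiff rfl rfl]
      · rw [indicator_of_notMem (by simp only [mem_Icc, not_and]; intro; linarith)]
        have hz : ∀ y : ℝ, T.indicator F (x, y) = 0 := by
          intro y
          apply indicator_of_notMem
          rintro ⟨-, h2, h3⟩
          simp only at h2 h3
          linarith
        simp [hz]
    · rw [indicator_of_notMem (by simp only [mem_Icc, not_and]; intro h; exact absurd h hx0)]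
      have hz : ∀ y : ℝ, T.indicator F (x, y) = 0 := by
        intro y
        apply indicator_of_notMem
        rintro ⟨h1, -, -⟩
        exact hx0 h1
      simp [hz]
  rw [show (fun x : ℝ => ∫ y, T.indicator F (x, y))
      = (Icc (0:ℝ) 1).indicator (fun x => ∫ y in Icc 0 (1-x), F (x, y)) from funext h1]
  rw [MeasureTheory.integral_indicator measurableSet_Icc]
  rw [MeasureTheory.integral_Icc_eq_integral_Ioc, ← intervalIntegral.integral_of_le zero_le_one]
  have h2 : ∀ x ∈ uIcc (0:ℝ) 1, (∫ y in Icc (0:ℝ) (1-x), F (x, y))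
      = -(2*Q)⁻¹ * ((((A+Q) + (x:ℂ)*(P-Q))^2)⁻¹ - ((A + (x:ℂ)*P)^2)⁻¹) := by
    intro x hx
    rw [uIcc_of_le zero_le_one, mem_Icc] at hx
    have hL : (0:ℝ) ≤ 1 - x := by linarith
    have hne' : ∀ t ∈ Set.uIcc (0:ℝ) (1-x), (A + (x:ℂ)*P) + (t:ℂ)*Q ≠ 0 := by
      intro t ht
      rw [uIcc_of_le hL, mem_Icc] at ht
      exact hne x t hx.1 ht.1 (by linarith)
    rw [MeasureTheory.integral_Icc_eq_integral_Ioc, ← intervalIntegral.integral_of_le hL]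
    simp only [hF]
    rw [ftc_cube (A + (x:ℂ)*P) Q hQ (1-x) hne']
    push_cast
    ring
  rw [intervalIntegral.integral_congr h2]
  have hneD1 : ∀ x ∈ Set.uIcc (0:ℝ) 1, (A+Q) + (x:ℂ)*(P-Q) ≠ 0 := by
    intro x hx
    rw [uIcc_of_le zero_le_one, mem_Icc] at hx
    have hh := hne x (1-x) hx.1 (by linarith) (by linarith)
    intro hc
    apply hh
    have he : A + (x:ℂ)*P + ((1-x:ℝ):ℂ)*Q = (A+Q) + (x:ℂ)*(P-Q) := by push_cast; ring
    rw [he, hc]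
  have hneD2 : ∀ x ∈ Set.uIcc (0:ℝ) 1, A + (x:ℂ)*P ≠ 0 := by
    intro x hx
    rw [uIcc_of_le zero_le_one, mem_Icc] at hx
    simpa using hne x 0 hx.1 le_rfl (by linarith)
  have hi1 : IntervalIntegrable (fun x : ℝ => (((A+Q) + (x:ℂ)*(P-Q))^2)⁻¹) volume 0 1 := by
    apply ContinuousOn.intervalIntegrable
    apply ContinuousOn.inv₀
    · fun_prop
    · exact fun x hx => pow_ne_zero _ (hneD1 x hx)
  have hi2 : IntervalIntegrable (fun x : ℝ => ((A + (x:ℂ)*P)^2)⁻¹) volume 0 1 := by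
    apply ContinuousOn.intervalIntegrable
    apply ContinuousOn.inv₀
    · fun_prop
    · exact fun x hx => pow_ne_zero _ (hneD2 x hx)
  rw [intervalIntegral.integral_const_mul, intervalIntegral.integral_sub hi1 hi2]
  rw [ftc_sq (A+Q) (P-Q) hPQ hneD1, ftc_sq A P hP hneD2]
  have hAQP : A + Q + (P - Q) = A + P := by ring
  rw [hAQP]
  field_simp
  ring

lemma tri_measure_zero (a b c : ℂ) (K : Submodule ℝ ℂ) (hK : K ≠ ⊤)
    (hp : b - a ∈ K) (hq : c - a ∈ K) :
    volume (convexHull ℝ ({a, b, c} : Set ℂ)) = 0 := by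
  have hsub : convexHull ℝ ({a, b, c} : Set ℂ) ⊆ {z : ℂ | z - a ∈ K} := by
    apply convexHull_min
    · rintro z (rfl | rfl | rfl)
      · simpa using K.zero_mem
      · exact hp
      · exact hq
    · intro x hx y hy s t hs ht hst
      simp only [mem_setOf_eq] at *
      have : s • x + t • y - a = s • (x - a) + t • (y - a) + ((s + t) - 1) • a := by
        module
      rw [hst] at this
      simp only [sub_self, zero_smul, add_zero] at this
      rw [this]
      exact K.add_mem (K.smul_mem _ hx) (K.smul_mem _ hy)
  have h0 : volume {z : ℂ | z - a ∈ K} = 0 := by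
    have : {z : ℂ | z - a ∈ K} = (fun z => -a + z) ⁻¹' (K : Set ℂ) := by
      ext z; simp [sub_eq_neg_add, add_comm]
    rw [this, measure_preimage_add]
    exact Measure.addHaar_submodule volume K hK
  exact le_antisymm (h0 ▸ measure_mono hsub) zero_le

lemma cross_ker_ne_top (p : ℂ) (hp : p ≠ 0) :
    LinearMap.ker (p.re • Complex.imLm - p.im • Complex.reLm) ≠ ⊤ := by
  intro htop
  have hmem : Complex.I * p ∈ LinearMap.ker (p.re • Complex.imLm - p.im • Complex.reLm) := by
    rw [htop]; trivial
  rw [LinearMap.mem_ker] at hmem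
  simp only [LinearMap.sub_apply, LinearMap.smul_apply, Complex.imLm_coe, Complex.reLm_coe,
    smul_eq_mul, Complex.mul_im, Complex.mul_re, Complex.I_re, Complex.I_im] at hmem
  have hre : p.re = 0 ∧ p.im = 0 := by constructor <;> nlinarith [sq_nonneg p.re, sq_nonneg p.im]
  exact hp (Complex.ext hre.1 hre.2)

lemma degenerate_measure_zero (a b c : ℂ)
    (hdet : (b-a).re * (c-a).im - (b-a).im * (c-a).re = 0) :
    volume (convexHull ℝ ({a, b, c} : Set ℂ)) = 0 := by
  by_cases hp : b - a ≠ 0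
  · refine tri_measure_zero a b c
      (LinearMap.ker ((b-a).re • Complex.imLm - (b-a).im • Complex.reLm))
      (cross_ker_ne_top _ hp) ?_ ?_
    · rw [LinearMap.mem_ker]
      show (b-a).re * (b - a).im - (b-a).im * (b - a).re = 0
      ring
    · rw [LinearMap.mem_ker]
      show (b-a).re * (c - a).im - (b-a).im * (c - a).re = 0
      exact hdet
  · push_neg at hp
    by_cases hq : c - a ≠ 0
    · refine tri_measure_zero a b c
        (LinearMap.ker ((c-a).re • Complex.imLm - (c-a).im • Complex.reLm))
        (cross_ker_ne_top _ hq) ?_ ?_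
      · rw [LinearMap.mem_ker]
        show (c-a).re * (b - a).im - (c-a).im * (b - a).re = 0
        rw [hp]
        simp
      · rw [LinearMap.mem_ker]
        show (c-a).re * (c - a).im - (c-a).im * (c - a).re = 0
        ring
    · push_neg at hq
      refine tri_measure_zero a b c ⊥ bot_ne_top ?_ ?_
      · rw [hp]; exact Submodule.zero_mem ⊥
      · rw [hq]; exact Submodule.zero_mem ⊥

noncomputable def triL (p q : ℂ) : ℂ →L[ℝ] ℂ :=
  Complex.reCLM.smulRight p + Complex.imCLM.smulRight q

lemma triL_apply (p q : ℂ) (w : ℂ) : triL p q w = w.re • p + w.im • q := rfl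

lemma triL_det (p q : ℂ) :
    LinearMap.det ((triL p q : ℂ →L[ℝ] ℂ) : ℂ →ₗ[ℝ] ℂ) = p.re * q.im - p.im * q.re := by
  rw [← LinearMap.det_toMatrix Complex.basisOneI]
  have hm : LinearMap.toMatrix Complex.basisOneI Complex.basisOneI
      ((triL p q : ℂ →L[ℝ] ℂ) : ℂ →ₗ[ℝ] ℂ) = !![p.re, q.re; p.im, q.im] := by
    ext i j
    fin_cases i <;> fin_cases j <;>
      simp [LinearMap.toMatrix_apply, Complex.coe_basisOneI, Complex.coe_basisOneI_repr,
        triL_apply]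
  rw [hm, Matrix.det_fin_two_of]
  ring

lemma volume_S : volume ({p : ℝ × ℝ | 0 ≤ p.1 ∧ 0 ≤ p.2 ∧ p.1 + p.2 ≤ 1}) =
    ENNReal.ofReal (1/2 : ℝ) := by
  set S : Set (ℝ × ℝ) := {p : ℝ × ℝ | 0 ≤ p.1 ∧ 0 ≤ p.2 ∧ p.1 + p.2 ≤ 1} with hSdef
  have hSclosed : IsClosed S := by
    have : S = {p : ℝ × ℝ | 0 ≤ p.1} ∩ ({p : ℝ × ℝ | 0 ≤ p.2}
        ∩ {p : ℝ × ℝ | p.1 + p.2 ≤ 1}) := by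
      ext p; simp [hSdef, and_assoc]
    rw [this]
    exact (isClosed_le continuous_const continuous_fst).inter
      ((isClosed_le continuous_const continuous_snd).inter
        (isClosed_le (continuous_fst.add continuous_snd) continuous_const))
  rw [Measure.volume_eq_prod, Measure.prod_apply hSclosed.measurableSet]
  have hsec : ∀ x : ℝ, volume (Prod.mk x ⁻¹' S)
      = (Icc (0:ℝ) 1).indicator (fun x => ENNReal.ofReal (1 - x)) x := by
    intro x
    by_cases hx0 : 0 ≤ x
    · by_cases hx1 : x ≤ 1
      · have : Prod.mk x ⁻¹' S = Icc 0 (1 - x) := by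
          ext y
          simp only [hSdef, mem_preimage, mem_setOf_eq, mem_Icc]
          constructor
          · rintro ⟨-, h2, h3⟩; exact ⟨h2, by linarith⟩
          · rintro ⟨h2, h3⟩; exact ⟨hx0, h2, by linarith⟩
        rw [this, Real.volume_Icc, indicator_of_mem (mem_Icc.2 ⟨hx0, hx1⟩)]
        norm_num
      · have : Prod.mk x ⁻¹' S = ∅ := by
          ext y
          simp only [hSdef, mem_preimage, mem_setOf_eq, mem_empty_iff_false, iff_false]
          rintro ⟨-, h2, h3⟩; linarith
        rw [this, indicator_of_notMem (by simp [mem_Icc]; intro; linarith)]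
        simp
    · have : Prod.mk x ⁻¹' S = ∅ := by
        ext y
        simp only [hSdef, mem_preimage, mem_setOf_eq, mem_empty_iff_false, iff_false]
        rintro ⟨h1, -, -⟩; exact hx0 h1
      rw [this, indicator_of_notMem (by simp [mem_Icc]; intro h; exact absurd h hx0)]
      simp
  rw [lintegral_congr hsec, lintegral_indicator measurableSet_Icc]
  have hInt : IntegrableOn (fun x : ℝ => 1 - x) (Icc 0 1) := by
    apply ContinuousOn.integrableOn_compact isCompact_Icc
    fun_prop
  rw [← ofReal_integral_eq_lintegral_ofReal hInt]
  · congr 1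
    rw [MeasureTheory.integral_Icc_eq_integral_Ioc, ← intervalIntegral.integral_of_le zero_le_one]
    have : ∫ x in (0:ℝ)..1, (1 - x) = 1/2 := by
      rw [intervalIntegral.integral_sub intervalIntegrable_const
        (intervalIntegral.intervalIntegrable_id)]
      simp
      norm_num
    rw [this]
  · filter_upwards [MeasureTheory.ae_restrict_mem measurableSet_Icc] with x hx
    simp only [mem_Icc] at hx
    exact sub_nonneg.2 hx.2

/-- For a triangle `Δ = convexHull ℝ {a,b,c}` in `ℂ` and `u : ℂ` such that
`1 - u·z ≠ 0` on `Δ`, the integral of `(1 - u·z)⁻³` over `Δ` equals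
`Area(Δ) / ((1-au)(1-bu)(1-cu))`. -/
theorem integral_triangle_inv_cube
    (a b c u : ℂ)
    (h : ∀ z ∈ convexHull ℝ ({a, b, c} : Set ℂ), 1 - u * z ≠ 0) :
    ∫ z in convexHull ℝ ({a, b, c} : Set ℂ), ((1 - u * z) ^ 3)⁻¹ =
      ((volume (convexHull ℝ ({a, b, c} : Set ℂ))).toReal : ℂ) /
        ((1 - a * u) * (1 - b * u) * (1 - c * u)) := by
  by_cases hu : u = 0
  · subst hu
    simp only [zero_mul, sub_zero, one_pow, inv_one, mul_zero]
    rw [MeasureTheory.setIntegral_const]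
    simp
    rfl
  by_cases hdet : (b-a).re * (c-a).im - (b-a).im * (c-a).re = 0
  · have hvol := degenerate_measure_zero a b c hdet
    have hres : volume.restrict (convexHull ℝ ({a, b, c} : Set ℂ)) = 0 :=
      Measure.restrict_eq_zero.2 hvol
    rw [hres, hvol]
    simp
  -- main case
  set Δ₀ := convexHull ℝ ({0, 1, Complex.I} : Set ℂ) with hΔ₀def
  set p := b - a with hpdef
  set q := c - a with hqdef
  set L := triL p q with hLdef
  set D := p.re * q.im - p.im * q.re with hDdef
  have hdetL : LinearMap.det ((L : ℂ →L[ℝ] ℂ) : ℂ →ₗ[ℝ] ℂ) = D := triL_det p q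
  have hdetD : D ≠ 0 := hdet
  set f : ℂ → ℂ := fun w => a + L w with hfdef
  have hΔ₀meas : MeasurableSet Δ₀ :=
    ((Set.toFinite ({0, 1, Complex.I} : Set ℂ)).isCompact_convexHull ℝ).isClosed.measurableSet
  -- image equality
  have himg : f '' Δ₀ = convexHull ℝ ({a, b, c} : Set ℂ) := by
    let g : ℂ →ᵃ[ℝ] ℂ := ⟨f, ((L : ℂ →L[ℝ] ℂ) : ℂ →ₗ[ℝ] ℂ), by
      intro pp v
      show f (v + pp) = L v + f pp
      simp only [hfdef, map_add]
      ring⟩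
    have hgf : f '' Δ₀ = g '' Δ₀ := rfl
    rw [hgf, hΔ₀def, AffineMap.image_convexHull]
    have h0 : g 0 = a := by show f 0 = a; simp [hfdef]
    have h1 : g 1 = b := by
      show f 1 = b
      simp only [hfdef, triL_apply, hLdef, Complex.one_re, Complex.one_im, one_smul, zero_smul,
        add_zero]
      rw [hpdef]; ring
    have h2 : g Complex.I = c := by
      show f Complex.I = c
      simp only [hfdef, triL_apply, hLdef, Complex.I_re, Complex.I_im, one_smul, zero_smul,
        zero_add]
      rw [hqdef]; ring
    rw [Set.image_insert_eq, Set.image_insert_eq, Set.image_singleton, h0, h1, h2]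
  have hfd : ∀ x ∈ Δ₀, HasFDerivWithinAt f L Δ₀ x := fun x _ =>
    ((L.hasFDerivAt).const_add a).hasFDerivWithinAt
  have hinj : InjOn f Δ₀ := by
    intro x _ y _ hxy
    have hL : L x = L y := by
      have := hxy
      simp only [hfdef] at this
      exact add_left_cancel this
    have hE := (LinearMap.equivOfDetNeZero ((L : ℂ →L[ℝ] ℂ) : ℂ →ₗ[ℝ] ℂ)
      (hdetL ▸ hdetD)).injective
    exact hE (by exact hL)
  have hcv := integral_image_eq_integral_abs_det_fderiv_smul volume hΔ₀meas hfd hinj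
    (fun z => ((1 - u * z) ^ 3)⁻¹)
  rw [← himg, hcv]
  have hdetL' : ∀ x : ℂ, |((L : ℂ →L[ℝ] ℂ)).det| = |D| := by
    intro x
    rw [ContinuousLinearMap.det, hdetL]
  simp only [hdetL' 0]
  rw [MeasureTheory.integral_smul]
  -- transfer to ℝ × ℝ
  set A := 1 - u * a with hAdef
  set P := -(u * p) with hPdef
  set Q := -(u * q) with hQdef
  set S : Set (ℝ × ℝ) := {r : ℝ × ℝ | 0 ≤ r.1 ∧ 0 ≤ r.2 ∧ r.1 + r.2 ≤ 1} with hSdef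
  set G : ℝ × ℝ → ℂ := fun r => ((A + (r.1:ℂ) * P + (r.2:ℂ) * Q)^3)⁻¹ with hGdef
  have hkey : ∀ x : ℂ, (1 - u * f x) = A + (x.re:ℂ) * P + (x.im:ℂ) * Q := by
    intro x
    simp only [hfdef, triL_apply, hLdef, Complex.real_smul, hAdef, hPdef, hQdef]
    ring
  have hΔ₀S : Δ₀ = Complex.measurableEquivRealProd ⁻¹' S := by
    rw [hΔ₀def, stdTriangle_eq]
    ext w
    simp [Complex.measurableEquivRealProd_apply, hSdef]
  have htrans : ∫ x in Δ₀, ((1 - u * f x) ^ 3)⁻¹ = ∫ r in S, G r := by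
    have heq : ∀ x : ℂ, ((1 - u * f x) ^ 3)⁻¹ = G (Complex.measurableEquivRealProd x) := by
      intro x
      rw [hkey x]
      rfl
    calc ∫ x in Δ₀, ((1 - u * f x) ^ 3)⁻¹
        = ∫ x in Complex.measurableEquivRealProd ⁻¹' S,
            G (Complex.measurableEquivRealProd x) := by
          rw [← hΔ₀S]
          exact MeasureTheory.setIntegral_congr_fun hΔ₀meas (fun x _ => heq x)
      _ = ∫ r in S, G r := Complex.volume_preserving_equiv_real_prod.setIntegral_preimage_emb
            Complex.measurableEquivRealProd.measurableEmbedding _ _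
  -- nonvanishing hypotheses
  have hp : p ≠ 0 := by
    intro hp0
    apply hdetD
    rw [hDdef, hp0]
    simp
  have hq : q ≠ 0 := by
    intro hq0
    apply hdetD
    rw [hDdef, hq0]
    simp
  have hpq : p ≠ q := by
    intro hpq0
    apply hdetD
    rw [hDdef, hpq0]
    ring
  have hP : P ≠ 0 := by simp only [hPdef, neg_ne_zero]; exact mul_ne_zero hu hp
  have hQ : Q ≠ 0 := by simp only [hQdef, neg_ne_zero]; exact mul_ne_zero hu hq
  have hPQ : P - Q ≠ 0 := by
    have : P - Q = -(u * (p - q)) := by rw [hPdef, hQdef]; ring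
    rw [this, neg_ne_zero]
    exact mul_ne_zero hu (sub_ne_zero.2 hpq)
  have hne : ∀ x y : ℝ, 0 ≤ x → 0 ≤ y → x + y ≤ 1 →
      A + (x:ℂ) * P + (y:ℂ) * Q ≠ 0 := by
    intro x y hx hy hxy
    have hw : (⟨x, y⟩ : ℂ) ∈ Δ₀ := by
      rw [hΔ₀def, stdTriangle_eq]
      exact ⟨hx, hy, hxy⟩
    have hz : f ⟨x, y⟩ ∈ convexHull ℝ ({a, b, c} : Set ℂ) :=
      himg ▸ Set.mem_image_of_mem f hw
    have := h _ hz
    rwa [hkey ⟨x, y⟩] at this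
  rw [htrans, core_lemma A P Q hP hQ hPQ hne]
  -- volume computation
  have hvol : volume (f '' Δ₀)
      = ENNReal.ofReal |D| * ENNReal.ofReal (1/2 : ℝ) := by
    have hcomp : f '' Δ₀ = (fun z => a + z) '' ((L : ℂ →L[ℝ] ℂ) '' Δ₀) := by
      rw [← Set.image_comp]
      rfl
    rw [hcomp]
    have htr : (fun z => a + z) '' ((L : ℂ →L[ℝ] ℂ) '' Δ₀)
        = (fun z => -a + z) ⁻¹' ((L : ℂ →L[ℝ] ℂ) '' Δ₀) := by
      ext z
      constructor
      · rintro ⟨w, hw, rfl⟩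
        simpa using hw
      · intro hz
        exact ⟨-a + z, hz, by ring⟩
    rw [htr, measure_preimage_add]
    have him := Measure.addHaar_image_linearMap (μ := volume)
      ((L : ℂ →L[ℝ] ℂ) : ℂ →ₗ[ℝ] ℂ) Δ₀
    show volume (⇑((L : ℂ →L[ℝ] ℂ) : ℂ →ₗ[ℝ] ℂ) '' Δ₀) = _
    rw [him, hdetL]
    congr 1
    rw [hΔ₀S]
    rw [Complex.volume_preserving_equiv_real_prod.measure_preimage]
    · exact volume_S
    · have : IsClosed S := by
        have hrw : S = {r : ℝ × ℝ | 0 ≤ r.1} ∩ ({r : ℝ × ℝ | 0 ≤ r.2}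
            ∩ {r : ℝ × ℝ | r.1 + r.2 ≤ 1}) := by
          ext r; simp [hSdef, and_assoc]
        rw [hrw]
        exact (isClosed_le continuous_const continuous_fst).inter
          ((isClosed_le continuous_const continuous_snd).inter
            (isClosed_le (continuous_fst.add continuous_snd) continuous_const))
      exact this.measurableSet.nullMeasurableSet
  rw [hvol]
  -- final algebra
  have hA : A ≠ 0 := by
    have := h a (subset_convexHull ℝ _ (by norm_num))
    rwa [hAdef]
  have hAP : A + P ≠ 0 := by
    have := h b (subset_convexHull ℝ _ (by norm_num))
    have heq : A + P = 1 - u * b := by rw [hAdef, hPdef, hpdef]; ring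
    rwa [heq]
  have hAQ : A + Q ≠ 0 := by
    have := h c (subset_convexHull ℝ _ (by norm_num))
    have heq : A + Q = 1 - u * c := by rw [hAdef, hQdef, hqdef]; ring
    rwa [heq]
  rw [ENNReal.toReal_mul, ENNReal.toReal_ofReal (abs_nonneg _),
    ENNReal.toReal_ofReal (by norm_num : (0:ℝ) ≤ 1/2)]
  rw [Complex.real_smul]
  have hrhs : (1 - a * u) * (1 - b * u) * (1 - c * u) = A * (A + P) * (A + Q) := by
    rw [hAdef, hPdef, hQdef, hpdef, hqdef]; ring
  rw [hrhs]
  have h2X : 2 * A * (A + P) * (A + Q) = 2 * (A * (A + P) * (A + Q)) := by ring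
  rw [h2X, mul_inv, div_eq_mul_inv]
  push_cast
  ring
end

section
/- Let n ≥ 2 and let z_0, z_1, …, z_n ∈ ℂ be nondegenerate. If real numbers c_{ij} (for 1 ≤ i < j ≤ n) satisfy Σ_{1≤i<j≤n} c_{ij}·χ_{conv{z_0,z_i,z_j}}(w) = 0 for volume-almost every w ∈ ℂ, then c_{ij} = 0 for all i < j. In other words, the indicator functions of the triangles with vertices z_0, z_i, z_j (1 ≤ i < j ≤ n) are linearly independent modulo almost-everywhere equality. -/
set_option maxHeartbeats 1000000


open MeasureTheory

/-- A tuple of points in `ℂ` is nondegenerate if the points are pairwise distinct and no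
three of them are collinear over `ℝ`. -/
def Nondegenerate {m : ℕ} (z : Fin m → ℂ) : Prop :=
  Function.Injective z ∧
    ∀ i j k : Fin m, i ≠ j → i ≠ k → j ≠ k → ¬Collinear ℝ ({z i, z j, z k} : Set ℂ)

noncomputable def triBasis {a b c : ℂ} (h : ¬Collinear ℝ ({a, b, c} : Set ℂ)) :
    AffineBasis (Fin 3) ℝ ℂ :=
  ⟨![a, b, c], affineIndependent_iff_not_collinear_set.2 h, by
    rw [(affineIndependent_iff_not_collinear_set.2 h).affineSpan_eq_top_iff_card_eq_finrank_add_one]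
    simp [Complex.finrank_real_complex]⟩

lemma triBasis_range {a b c : ℂ} (h : ¬Collinear ℝ ({a, b, c} : Set ℂ)) :
    Set.range (triBasis h) = ({a, b, c} : Set ℂ) := by
  show Set.range ![a, b, c] = _
  simp_rw [Matrix.range_cons, Matrix.range_empty, Set.singleton_union, LawfulSingleton.insert_empty_eq]

lemma triBasis_apply {a b c : ℂ} (h : ¬Collinear ℝ ({a, b, c} : Set ℂ)) :
    triBasis h 0 = a ∧ triBasis h 1 = b ∧ triBasis h 2 = c := by
  refine ⟨rfl, rfl, rfl⟩

lemma triangle_interior_mem {a b c x : ℂ} (h : ¬Collinear ℝ ({a, b, c} : Set ℂ))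
    (hx : x ∈ convexHull ℝ ({a, b, c} : Set ℂ))
    (h1 : x ∉ segment ℝ b c) (h2 : x ∉ segment ℝ a c) (h3 : x ∉ segment ℝ a b) :
    x ∈ interior (convexHull ℝ ({a, b, c} : Set ℂ)) := by
  set B := triBasis h with hB
  rw [← triBasis_range h] at hx ⊢
  rw [B.convexHull_eq_nonneg_coord] at hx
  rw [B.interior_convexHull]
  intro k
  rcases lt_or_eq_of_le (hx k) with hk | hk
  · exact hk
  exfalso
  have hsum : B.coord 0 x + B.coord 1 x + B.coord 2 x = 1 := by
    have := B.sum_coord_apply_eq_one x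
    rwa [Fin.sum_univ_three] at this
  have hlin : B.coord 0 x • a + B.coord 1 x • b + B.coord 2 x • c = x := by
    have := B.linear_combination_coord_eq_self x
    rw [Fin.sum_univ_three] at this
    rwa [(triBasis_apply h).1, (triBasis_apply h).2.1, (triBasis_apply h).2.2] at this
  fin_cases k
  · have hk0 : B.coord 0 x = 0 := hk.symm
    rw [hk0, zero_smul, zero_add] at hlin
    exact h1 ⟨B.coord 1 x, B.coord 2 x, hx 1, hx 2, by linarith, hlin⟩
  · have hk0 : B.coord 1 x = 0 := hk.symm
    rw [hk0, zero_smul, add_zero] at hlin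
    exact h2 ⟨B.coord 0 x, B.coord 2 x, hx 0, hx 2, by linarith, hlin⟩
  · have hk0 : B.coord 2 x = 0 := hk.symm
    rw [hk0, zero_smul, add_zero] at hlin
    exact h3 ⟨B.coord 0 x, B.coord 1 x, hx 0, hx 1, by linarith, hlin⟩

lemma triangle_not_interior {a b c x : ℂ} (h : ¬Collinear ℝ ({a, b, c} : Set ℂ))
    (hx : x ∈ openSegment ℝ b c) :
    x ∉ interior (convexHull ℝ ({a, b, c} : Set ℂ)) := by
  set B := triBasis h with hB
  rw [← triBasis_range h, B.interior_convexHull]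
  rw [openSegment_eq_image_lineMap] at hx
  obtain ⟨t, -, rfl⟩ := hx
  intro hmem
  have hb0 : B.coord 0 b = 0 := by
    rw [← (triBasis_apply h).2.1]
    exact B.coord_apply_ne (by decide)
  have hc0 : B.coord 0 c = 0 := by
    rw [← (triBasis_apply h).2.2]
    exact B.coord_apply_ne (by decide)
  have h0 : B.coord 0 (AffineMap.lineMap b c t) = 0 := by
    rw [(B.coord 0).apply_lineMap b c t, hb0, hc0]
    simp
  have := hmem 0
  rw [h0] at this
  exact lt_irrefl _ this

/-- If two distinct points lie both on the segment `[a,b]` and on the line through `u, v`,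
then all four of `a, b, u, v` lie on the line through those two points. -/
lemma four_mem_line {a b u v x y : ℂ} (hxy : x ≠ y)
    (hxa : x ∈ segment ℝ a b) (hya : y ∈ segment ℝ a b)
    (hxu : x ∈ line[ℝ, u, v]) (hyu : y ∈ line[ℝ, u, v]) :
    a ∈ line[ℝ, x, y] ∧ b ∈ line[ℝ, x, y] ∧ u ∈ line[ℝ, x, y] ∧ v ∈ line[ℝ, x, y] := by
  have hseg : segment ℝ a b ⊆ line[ℝ, a, b] := by
    rw [← convexHull_pair]
    exact convexHull_subset_affineSpan _
  have h1 : Collinear ℝ ({x, y, a, b} : Set ℂ) :=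
    collinear_insert_insert_of_mem_affineSpan_pair (hseg hxa) (hseg hya)
  have h2 : Collinear ℝ ({x, y, u, v} : Set ℂ) :=
    collinear_insert_insert_of_mem_affineSpan_pair hxu hyu
  refine ⟨h1.mem_affineSpan_of_mem_of_ne (by simp) (by simp) (by simp) hxy,
    h1.mem_affineSpan_of_mem_of_ne (by simp) (by simp) (by simp) hxy,
    h2.mem_affineSpan_of_mem_of_ne (by simp) (by simp) (by simp) hxy,
    h2.mem_affineSpan_of_mem_of_ne (by simp) (by simp) (by simp) hxy⟩

/-- A point of a convex set with nonempty interior is in the closure of the interior. -/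
lemma mem_closure_interior_of_convex {s : Set ℂ} (hs : Convex ℝ s) {x y : ℂ}
    (hx : x ∈ s) (hy : y ∈ interior s) : x ∈ closure (interior s) := by
  rw [mem_closure_iff]
  intro o ho hxo
  have hcont : Filter.Tendsto (fun t : ℝ => AffineMap.lineMap x y t) (nhds 0) (nhds x) := by
    have : Continuous (fun t : ℝ => AffineMap.lineMap x y t) :=
      AffineMap.lineMap_continuous
    simpa using this.tendsto 0
  have hev : ∀ᶠ t : ℝ in nhdsWithin 0 (Set.Ioi 0),
      (AffineMap.lineMap x y t : ℂ) ∈ o ∧ t ∈ Set.Ioo (0:ℝ) 1 := by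
    refine Filter.Eventually.and ?_ ?_
    · exact (hcont.mono_left nhdsWithin_le_nhds).eventually (ho.mem_nhds hxo)
    · filter_upwards [Ioo_mem_nhdsGT_of_mem (by norm_num : (0:ℝ) ∈ Set.Ico (0:ℝ) 1)] with t ht
      exact ht
  obtain ⟨t, hto, hti⟩ := hev.exists
  refine ⟨AffineMap.lineMap x y t, hto, ?_⟩
  have : (AffineMap.lineMap x y t : ℂ) ∈ openSegment ℝ x y := by
    rw [openSegment_eq_image_lineMap]
    exact ⟨t, hti, rfl⟩
  exact hs.openSegment_closure_interior_subset_interior (subset_closure hx) hy this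

/-- From an open nonempty set and an a.e. property, extract a point. -/
lemma exists_mem_of_ae {s : Set ℂ} (hs : IsOpen s) (hne : s.Nonempty)
    {P : ℂ → Prop} (hP : ∀ᵐ w : ℂ, P w) : ∃ w ∈ s, P w := by
  by_contra hcon
  push_neg at hcon
  have hsub : s ⊆ {w | P w}ᶜ := fun w hw => hcon w hw
  have h0 : volume ({w : ℂ | P w}ᶜ) = 0 := hP
  have := hs.measure_pos volume hne
  exact absurd (le_antisymm (le_trans (measure_mono hsub) h0.le) zero_le) this.ne'


/-- For a nondegenerate tuple `z_0, …, z_n` (`n ≥ 2`), the indicator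
functions of the triangles `conv {z_0, z_i, z_j}` (`1 ≤ i < j ≤ n`) are linearly
independent modulo equality volume-almost everywhere. -/
theorem indicators_triangles_linearIndependent_ae
    (n : ℕ) (hn : 2 ≤ n) (z : Fin (n + 1) → ℂ) (hz : Nondegenerate z)
    (c : Fin (n + 1) → Fin (n + 1) → ℝ)
    (h : ∀ᵐ w : ℂ,
      ∑ p ∈ Finset.univ.filter
          (fun p : Fin (n + 1) × Fin (n + 1) => 0 < (p.1 : ℕ) ∧ (p.1 : ℕ) < (p.2 : ℕ)),
        c p.1 p.2 *
          (convexHull ℝ ({z 0, z p.1, z p.2} : Set ℂ)).indicator (fun _ => (1 : ℝ)) w = 0) :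
    ∀ i j : Fin (n + 1), 0 < (i : ℕ) → (i : ℕ) < (j : ℕ) → c i j = 0 := by
  classical
  intro i j hi hij
  obtain ⟨hinj, hncol⟩ := hz
  set Q := Finset.univ.filter
      (fun p : Fin (n + 1) × Fin (n + 1) => 0 < (p.1 : ℕ) ∧ (p.1 : ℕ) < (p.2 : ℕ)) with hQdef
  set T : Fin (n + 1) × Fin (n + 1) → Set ℂ :=
    fun p => convexHull ℝ ({z 0, z p.1, z p.2} : Set ℂ) with hTdef
  have hQmem : ∀ p : Fin (n + 1) × Fin (n + 1),
      p ∈ Q ↔ 0 < (p.1 : ℕ) ∧ (p.1 : ℕ) < (p.2 : ℕ) := by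
    intro p; rw [hQdef, Finset.mem_filter]; simp
  have hzero : ((0 : Fin (n + 1)) : ℕ) = 0 := rfl
  have hij_mem : (i, j) ∈ Q := (hQmem (i, j)).2 ⟨hi, hij⟩
  set R := Q.erase (i, j) with hRdef
  have hRQ : ∀ p ∈ R, p ∈ Q := fun p hp => Finset.mem_of_mem_erase hp
  have hncol' : ∀ p ∈ Q, ¬Collinear ℝ ({z 0, z p.1, z p.2} : Set ℂ) := by
    intro p hp
    rw [hQmem] at hp
    have hzv : ∀ a : Fin (n+1), 0 < (a : ℕ) → (0 : Fin (n+1)) ≠ a := by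
      intro a ha e
      rw [← e] at ha
      simp at ha
    refine hncol 0 p.1 p.2 (hzv _ hp.1) (hzv _ (by omega)) ?_
    rw [Fin.ne_iff_vne]; omega
  have hTclosed : ∀ p, IsClosed (T p) := fun p =>
    ((Set.toFinite _).isCompact_convexHull ℝ).isClosed
  have hij' : i ≠ j := by rw [Fin.ne_iff_vne]; omega
  have hzij : z i ≠ z j := fun e => hij' (hinj e)
  set L := openSegment ℝ (z i) (z j) with hLdef
  have hLinf : L.Infinite := by
    rw [hLdef, openSegment_eq_image_lineMap]
    exact (Set.Ioo_infinite (by norm_num : (0:ℝ) < 1)).image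
      ((AffineMap.lineMap_injective ℝ hzij).injOn)
  have hLsub_seg : L ⊆ segment ℝ (z i) (z j) := openSegment_subset_segment ℝ _ _
  have hLline : L ⊆ (line[ℝ, z i, z j] : Set ℂ) := fun w hw => by
    have h1 := hLsub_seg hw
    rw [← convexHull_pair] at h1
    exact convexHull_subset_affineSpan _ h1
  -- key subsingleton lemma
  have key : ∀ a b : Fin (n + 1),
      (∃ k l m : Fin (n + 1), k ≠ l ∧ k ≠ m ∧ l ≠ m ∧
        ({z k, z l, z m} : Set ℂ) ⊆ ({z a, z b, z i, z j} : Set ℂ)) →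
      (L ∩ segment ℝ (z a) (z b)).Subsingleton := by
    rintro a b ⟨k, l, m, hkl, hkm, hlm, hsubset⟩ x ⟨hxL, hxs⟩ y ⟨hyL, hys⟩
    by_contra hne
    obtain ⟨ha, hb, hu, hv⟩ := four_mem_line hne hxs hys (hLline hxL) (hLline hyL)
    have hall : ({z a, z b, z i, z j} : Set ℂ) ⊆ (line[ℝ, x, y] : Set ℂ) := by
      intro w hw
      simp only [Set.mem_insert_iff, Set.mem_singleton_iff] at hw
      rcases hw with rfl | rfl | rfl | rfl
      exacts [ha, hb, hu, hv]
    exact hncol k l m hkl hkm hlm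
      (collinear_triple_of_mem_affineSpan_pair
        (hall (hsubset (by simp))) (hall (hsubset (by simp))) (hall (hsubset (by simp))))
  -- triples for the three edges of each other triangle
  have hRfacts : ∀ p ∈ R, 0 < (p.1 : ℕ) ∧ (p.1 : ℕ) < (p.2 : ℕ) ∧
      ¬((p.1 : ℕ) = (i : ℕ) ∧ (p.2 : ℕ) = (j : ℕ)) := by
    intro p hp
    have h1 := (hQmem p).1 (hRQ p hp)
    have h2 := Finset.ne_of_mem_erase hp
    refine ⟨h1.1, h1.2, fun hc => h2 ?_⟩
    have : p.1 = i := Fin.ext hc.1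
    have : p.2 = j := Fin.ext hc.2
    exact Prod.ext (Fin.ext hc.1) (Fin.ext hc.2)
  have keyR : ∀ p ∈ R,
      (L ∩ segment ℝ (z 0) (z p.1)).Subsingleton ∧
      (L ∩ segment ℝ (z 0) (z p.2)).Subsingleton ∧
      (L ∩ segment ℝ (z p.1) (z p.2)).Subsingleton := by
    intro p hp
    obtain ⟨hp1, hp2, hp3⟩ := hRfacts p hp
    have hzv : ∀ a : Fin (n+1), 0 < (a : ℕ) → (0 : Fin (n+1)) ≠ a := by
      intro a ha e
      rw [← e] at ha
      simp at ha
    have h0i : (0 : Fin (n+1)) ≠ i := hzv i hi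
    have h0j : (0 : Fin (n+1)) ≠ j := hzv j (by omega)
    refine ⟨key 0 p.1 ⟨0, i, j, h0i, h0j, hij', ?_⟩, key 0 p.2 ⟨0, i, j, h0i, h0j, hij', ?_⟩, ?_⟩
    · intro w hw
      simp only [Set.mem_insert_iff, Set.mem_singleton_iff] at hw ⊢
      rcases hw with rfl | rfl | rfl
      exacts [Or.inl rfl, Or.inr (Or.inr (Or.inl rfl)), Or.inr (Or.inr (Or.inr rfl))]
    · intro w hw
      simp only [Set.mem_insert_iff, Set.mem_singleton_iff] at hw ⊢
      rcases hw with rfl | rfl | rfl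
      exacts [Or.inl rfl, Or.inr (Or.inr (Or.inl rfl)), Or.inr (Or.inr (Or.inr rfl))]
    · by_cases hc : p.1 = i ∨ p.1 = j
      · have hne1 : p.2 ≠ i := by
          rw [Fin.ne_iff_vne]
          rcases hc with rfl | rfl <;> omega
        have hne2 : p.2 ≠ j := by
          rw [Fin.ne_iff_vne]
          rcases hc with rfl | rfl <;> omega
        refine key p.1 p.2 ⟨p.2, i, j, hne1, hne2, hij', ?_⟩
        intro w hw
        simp only [Set.mem_insert_iff, Set.mem_singleton_iff] at hw ⊢
        rcases hw with rfl | rfl | rfl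
        exacts [Or.inr (Or.inl rfl), Or.inr (Or.inr (Or.inl rfl)), Or.inr (Or.inr (Or.inr rfl))]
      · push_neg at hc
        refine key p.1 p.2 ⟨p.1, i, j, hc.1, hc.2, hij', ?_⟩
        intro w hw
        simp only [Set.mem_insert_iff, Set.mem_singleton_iff] at hw ⊢
        rcases hw with rfl | rfl | rfl
        exacts [Or.inl rfl, Or.inr (Or.inr (Or.inl rfl)), Or.inr (Or.inr (Or.inr rfl))]
  -- choose a good point x on the open segment
  set Bad : Set ℂ := ⋃ p ∈ R,
    (segment ℝ (z 0) (z p.1) ∪ segment ℝ (z 0) (z p.2) ∪ segment ℝ (z p.1) (z p.2)) with hBaddef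
  have hBadFin : (L ∩ Bad).Finite := by
    have heq : L ∩ Bad = ⋃ p ∈ R,
        ((L ∩ segment ℝ (z 0) (z p.1)) ∪ (L ∩ segment ℝ (z 0) (z p.2)) ∪
          (L ∩ segment ℝ (z p.1) (z p.2))) := by
      rw [hBaddef]
      ext w
      simp only [Set.mem_inter_iff, Set.mem_iUnion, Set.mem_union, exists_prop]
      constructor
      · rintro ⟨hwL, p, hp, (hs | hs) | hs⟩
        · exact ⟨p, hp, Or.inl (Or.inl ⟨hwL, hs⟩)⟩
        · exact ⟨p, hp, Or.inl (Or.inr ⟨hwL, hs⟩)⟩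
        · exact ⟨p, hp, Or.inr ⟨hwL, hs⟩⟩
      · rintro ⟨p, hp, (⟨hwL, hs⟩ | ⟨hwL, hs⟩) | ⟨hwL, hs⟩⟩
        · exact ⟨hwL, p, hp, Or.inl (Or.inl hs)⟩
        · exact ⟨hwL, p, hp, Or.inl (Or.inr hs)⟩
        · exact ⟨hwL, p, hp, Or.inr hs⟩
    rw [heq]
    refine Set.Finite.biUnion R.finite_toSet (fun p hp => ?_)
    obtain ⟨k1, k2, k3⟩ := keyR p hp
    exact ((k1.finite.union k2.finite).union k3.finite)
  obtain ⟨x, hxmem⟩ := (hLinf.diff hBadFin).nonempty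
  have hxL : x ∈ L := hxmem.1
  have hxBad : x ∉ Bad := fun hb => hxmem.2 ⟨hxL, hb⟩
  have hxseg : ∀ p ∈ R, x ∉ segment ℝ (z 0) (z p.1) ∧ x ∉ segment ℝ (z 0) (z p.2) ∧
      x ∉ segment ℝ (z p.1) (z p.2) := by
    intro p hp
    have hx' : x ∉ (segment ℝ (z 0) (z p.1) ∪ segment ℝ (z 0) (z p.2) ∪
        segment ℝ (z p.1) (z p.2)) := fun hmem => hxBad (Set.mem_biUnion hp hmem)
    simp only [Set.mem_union] at hx'
    push_neg at hx'
    exact ⟨hx'.1.1, hx'.1.2, hx'.2⟩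
  have hclass : ∀ p ∈ R, x ∈ T p → x ∈ interior (T p) := by
    intro p hp hxT
    obtain ⟨h1, h2, h3⟩ := hxseg p hp
    exact triangle_interior_mem (hncol' p (hRQ p hp)) hxT h3 h2 h1
  set W : Fin (n + 1) × Fin (n + 1) → Set ℂ :=
    fun p => if x ∈ T p then interior (T p) else (T p)ᶜ with hWdef
  set U := ⋂ p ∈ R, W p with hUdef
  have hUopen : IsOpen U := by
    refine isOpen_biInter_finset fun p hp => ?_
    rw [hWdef]
    by_cases hxT : x ∈ T p
    · simp only [if_pos hxT]; exact isOpen_interior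
    · simp only [if_neg hxT]; exact (hTclosed p).isOpen_compl
  have hxU : x ∈ U := by
    rw [hUdef]
    refine Set.mem_biInter fun p hp => ?_
    rw [hWdef]
    by_cases hxT : x ∈ T p
    · simp only [if_pos hxT]; exact hclass p hp hxT
    · simp only [if_neg hxT]; exact hxT
  have hWval : ∀ p ∈ R, ∀ w ∈ U, (T p).indicator (fun _ => (1:ℝ)) w
      = if x ∈ T p then (1:ℝ) else 0 := by
    intro p hp w hw
    rw [hUdef] at hw
    have hwW : w ∈ (if x ∈ T p then interior (T p) else (T p)ᶜ) := Set.mem_iInter₂.1 hw p hp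
    by_cases hxT : x ∈ T p
    · rw [if_pos hxT] at hwW ⊢
      exact Set.indicator_of_mem (interior_subset hwW) _
    · rw [if_neg hxT] at hwW ⊢
      exact Set.indicator_of_notMem hwW _
  -- facts about the (i,j) triangle
  have hncolij : ¬Collinear ℝ ({z 0, z i, z j} : Set ℂ) := hncol' (i, j) hij_mem
  have hxTij : x ∈ T (i, j) := by
    have hsub : segment ℝ (z i) (z j) ⊆ T (i, j) :=
      segment_subset_convexHull (by simp) (by simp)
    exact hsub (hLsub_seg hxL)
  have hyint : (Finset.univ.centroid ℝ (triBasis hncolij)) ∈ interior (T (i, j)) := by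
    have := (triBasis hncolij).centroid_mem_interior_convexHull
    rwa [triBasis_range hncolij] at this
  have hclosI : x ∈ closure (interior (T (i, j))) :=
    mem_closure_interior_of_convex (convex_convexHull ℝ _) hxTij hyint
  have hnotint : x ∉ interior (T (i, j)) := triangle_not_interior hncolij hxL
  have hclosC : x ∈ closure ((T (i, j))ᶜ) := by
    rw [closure_compl]; exact hnotint
  -- extract points
  obtain ⟨y1, hy1⟩ := mem_closure_iff.1 hclosI U hUopen hxU
  obtain ⟨y2, hy2⟩ := mem_closure_iff.1 hclosC U hUopen hxU
  have hO1 : IsOpen (U ∩ interior (T (i, j))) := hUopen.inter isOpen_interior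
  have hO2 : IsOpen (U ∩ (T (i, j))ᶜ) := hUopen.inter (hTclosed _).isOpen_compl
  obtain ⟨w1, hw1, hF1⟩ := exists_mem_of_ae hO1 ⟨y1, hy1⟩ h
  obtain ⟨w2, hw2, hF2⟩ := exists_mem_of_ae hO2 ⟨y2, hy2⟩ h
  have hsplit : ∀ w : ℂ, (∑ p ∈ Q, c p.1 p.2 * (T p).indicator (fun _ => (1:ℝ)) w)
      = c i j * (T (i, j)).indicator (fun _ => (1:ℝ)) w
        + ∑ p ∈ R, c p.1 p.2 * (T p).indicator (fun _ => (1:ℝ)) w := fun w =>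
    (Finset.add_sum_erase Q _ hij_mem).symm
  have hF1' : c i j * (T (i, j)).indicator (fun _ => (1:ℝ)) w1
      + ∑ p ∈ R, c p.1 p.2 * (T p).indicator (fun _ => (1:ℝ)) w1 = 0 := by
    rw [← hsplit w1]; exact hF1
  have hF2' : c i j * (T (i, j)).indicator (fun _ => (1:ℝ)) w2
      + ∑ p ∈ R, c p.1 p.2 * (T p).indicator (fun _ => (1:ℝ)) w2 = 0 := by
    rw [← hsplit w2]; exact hF2
  have hsame : ∑ p ∈ R, c p.1 p.2 * (T p).indicator (fun _ => (1:ℝ)) w1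
      = ∑ p ∈ R, c p.1 p.2 * (T p).indicator (fun _ => (1:ℝ)) w2 :=
    Finset.sum_congr rfl fun p hp => by
      rw [hWval p hp w1 hw1.1, hWval p hp w2 hw2.1]
  have hind1 : (T (i, j)).indicator (fun _ => (1:ℝ)) w1 = 1 :=
    Set.indicator_of_mem (interior_subset hw1.2) _
  have hind2 : (T (i, j)).indicator (fun _ => (1:ℝ)) w2 = 0 :=
    Set.indicator_of_notMem hw2.2 _
  rw [hind1, mul_one] at hF1'
  rw [hind2, mul_zero, zero_add] at hF2'
  linarith [hF1', hF2', hsame]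
end

section
/- Let S ⊂ ℂ be a finite nondegenerate set with at least 3 points, and let K ⊆ L¹(ℂ, volume; ℝ) be the convex cone consisting of all finite sums Σ_T c_T·[χ_T] with c_T ≥ 0, where T ranges over the triangles convexHull ℝ {a,b,c} with a, b, c three distinct points of S, and [χ_T] is the class of the indicator of T in L¹. Then for three distinct points a, b, c ∈ S, the element [χ_{convexHull ℝ {a,b,c}}] spans an extreme ray of K — meaning it is nonzero and whenever g, h ∈ K satisfy g + h = [χ_{convexHull ℝ {a,b,c}}], both g and h are nonnegative real multiples of [χ_{convexHull ℝ {a,b,c}}] — if and only if convexHull ℝ {a,b,c} ∩ S = {a,b,c}, i.e. the triangle contains no point of S other than its own vertices. -/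
set_option linter.unusedVariables false
set_option maxHeartbeats 1000000

open MeasureTheory

open Set in
lemma er_collinear_volume_zero {s : Set ℂ} (h : Collinear ℝ s) :
    (volume : Measure ℂ) s = 0 := by
  rcases s.eq_empty_or_nonempty with rfl | hne
  · simp
  · refine measure_mono_null (subset_affineSpan ℝ s) (Measure.addHaar_affineSubspace _ _ ?_)
    intro htop
    have h1 : Module.finrank ℝ (vectorSpan ℝ s) ≤ 1 := by
      have := h.finiteDimensional_vectorSpan
      exact (collinear_iff_finrank_le_one).mp h
    have h2 : (affineSpan ℝ s).direction = ⊤ := by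
      rw [htop]; exact AffineSubspace.direction_top ℝ _ _
    rw [direction_affineSpan] at h2
    rw [h2] at h1
    simp [finrank_top, Complex.finrank_real_complex] at h1

lemma er_span_top_of_not_collinear {s : Set ℂ} (hne : s.Nonempty) (h : ¬ Collinear ℝ s) :
    affineSpan ℝ s = ⊤ := by
  by_contra htop
  apply h
  have hd : (affineSpan ℝ s).direction ≠ ⊤ := fun hdt => htop
    ((AffineSubspace.direction_eq_top_iff_of_nonempty ((affineSpan_nonempty ℝ).mpr hne)).mp hdt)
  rw [direction_affineSpan] at hd
  have hlt : vectorSpan ℝ s < ⊤ := lt_top_iff_ne_top.mpr hd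
  have h2 : Module.finrank ℝ (vectorSpan ℝ s) < Module.finrank ℝ ℂ := Submodule.finrank_lt hlt.ne
  rw [Complex.finrank_real_complex] at h2
  have : FiniteDimensional ℝ (vectorSpan ℝ s) := inferInstance
  exact collinear_iff_finrank_le_one.mpr (by omega)

lemma er_tri_interior_nonempty {x y z : ℂ} (h : ¬ Collinear ℝ ({x,y,z} : Set ℂ)) :
    (interior (convexHull ℝ ({x,y,z} : Set ℂ))).Nonempty := by
  have hconv : Convex ℝ (convexHull ℝ ({x,y,z} : Set ℂ)) := convex_convexHull _ _
  have hspan : affineSpan ℝ (convexHull ℝ ({x,y,z} : Set ℂ)) = ⊤ := by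
    rw [affineSpan_convexHull]
    exact er_span_top_of_not_collinear ⟨x, by simp⟩ h
  exact hconv.interior_nonempty_iff_affineSpan_eq_top.mpr hspan

lemma er_tri_vol_pos {x y z : ℂ} (h : ¬ Collinear ℝ ({x,y,z} : Set ℂ)) :
    0 < (volume : Measure ℂ) (convexHull ℝ ({x,y,z} : Set ℂ)) := by
  obtain ⟨p, hp⟩ := er_tri_interior_nonempty h
  obtain ⟨ε, hε, hball⟩ := Metric.isOpen_iff.mp isOpen_interior p hp
  calc (0:ENNReal) < volume (Metric.ball p ε) := Metric.measure_ball_pos volume p hε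
    _ ≤ _ := measure_mono (hball.trans interior_subset)

lemma er_mem_tri {a b c : ℂ} {u v w : ℝ} (hu : 0 ≤ u) (hv : 0 ≤ v) (hw : 0 ≤ w)
    (huvw : u + v + w = 1) : u • a + v • b + w • c ∈ convexHull ℝ ({a,b,c} : Set ℂ) := by
  have := (convex_convexHull ℝ ({a,b,c} : Set ℂ)).sum_mem (t := Finset.univ)
    (w := ![u,v,w]) (z := ![a,b,c]) (by intro i _; fin_cases i <;> simpa)
    (by simp [Fin.sum_univ_three, huvw])
    (by intro i _; fin_cases i <;>
        · apply subset_convexHull ℝ ({a,b,c}:Set ℂ); simp)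
  simpa [Fin.sum_univ_three] using this

open Set in
lemma er_tri_mem {a b c x : ℂ} (hx : x ∈ convexHull ℝ ({a,b,c}:Set ℂ)) :
    ∃ u v w : ℝ, 0 ≤ u ∧ 0 ≤ v ∧ 0 ≤ w ∧ u + v + w = 1 ∧ u • a + v • b + w • c = x := by
  rw [show ({a,b,c} : Set ℂ) = insert a {b,c} from rfl,
    convexHull_insert ⟨b, by simp⟩, convexHull_pair] at hx
  rw [mem_convexJoin] at hx
  obtain ⟨a', ha', y, hy, hxy⟩ := hx
  rw [mem_singleton_iff] at ha'; subst ha'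
  obtain ⟨v', w', hv', hw', hvw', rfl⟩ := hy
  obtain ⟨u, t, hu, ht, hut, rfl⟩ := hxy
  exact ⟨u, t * v', t * w', hu, by positivity, by positivity, by nlinarith, by
    simp only [smul_add, smul_smul]; ring⟩

lemma er_bary_unique {a b c : ℂ} (h : ¬Collinear ℝ ({a,b,c} : Set ℂ)) {u v w u' v' w' : ℝ}
    (h1 : u + v + w = 1) (h2 : u' + v' + w' = 1)
    (heq : u • a + v • b + w • c = u' • a + v' • b + w' • c) :
    u = u' ∧ v = v' ∧ w = w' := by
  have hai : AffineIndependent ℝ ![a, b, c] :=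
    affineIndependent_iff_not_collinear_set.mpr h
  rw [affineIndependent_iff] at hai
  have hz : (u - u') • a + (v - v') • b + (w - w') • c = 0 := by
    have hz0 : (u • a + v • b + w • c) - (u' • a + v' • b + w' • c) = 0 := sub_eq_zero.mpr heq
    rw [← hz0]; module
  have := hai Finset.univ ![u - u', v - v', w - w'] (by simp [Fin.sum_univ_three]; linarith)
    (by simpa [Fin.sum_univ_three] using hz)
  refine ⟨?_, ?_, ?_⟩
  · have := this 0 (by simp); simpa [sub_eq_zero] using this
  · have := this 1 (by simp); simpa [sub_eq_zero] using this
  · have := this 2 (by simp); simpa [sub_eq_zero] using this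

lemma er_seg_vol_zero (p q : ℂ) : (volume : Measure ℂ) (segment ℝ p q) = 0 := by
  rcases eq_or_ne p q with rfl | hpq
  · rw [segment_same]; exact measure_singleton _
  have hsub : segment ℝ p q ⊆ (line[ℝ, p, q] : Set ℂ) := by
    rw [← convexHull_pair]; exact convexHull_subset_affineSpan _
  refine measure_mono_null hsub (Measure.addHaar_affineSubspace _ _ ?_)
  intro htop
  have hdir : (line[ℝ, p, q]).direction = ⊤ := by
    rw [htop]; exact AffineSubspace.direction_top ℝ _ _
  rw [direction_affineSpan, vectorSpan_pair] at hdir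
  have h1 : Module.finrank ℝ (ℝ ∙ (p -ᵥ q)) = 1 :=
    finrank_span_singleton (by simpa [sub_eq_zero] using hpq)
  rw [hdir, finrank_top, Complex.finrank_real_complex] at h1
  norm_num at h1

lemma er_cover_aux {a b c p x : ℂ} {α β γ u v w : ℝ} (hα : 0 < α) (hβ : 0 < β) (hγ : 0 < γ)
    (hs : α + β + γ = 1) (hp : α • a + β • b + γ • c = p)
    (hu : 0 ≤ u) (hv : 0 ≤ v) (hw : 0 ≤ w) (hsum : u + v + w = 1)
    (hx : u • a + v • b + w • c = x)
    (h1 : w * α ≤ u * γ) (h2 : w * β ≤ v * γ) :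
    x ∈ convexHull ℝ ({p, a, b} : Set ℂ) := by
  set t := w / γ with htdef
  have ht : 0 ≤ t := div_nonneg hw hγ.le
  have htγ : t * γ = w := div_mul_cancel₀ w hγ.ne'
  have hs1 : 0 ≤ u - t * α := by
    rw [sub_nonneg, htdef, div_mul_eq_mul_div, div_le_iff₀ hγ]
    linarith
  have hs2 : 0 ≤ v - t * β := by
    rw [sub_nonneg, htdef, div_mul_eq_mul_div, div_le_iff₀ hγ]
    linarith
  have hsum' : t + (u - t * α) + (v - t * β) = 1 := by
    have : t * α + t * β + t * γ = t := by
      have : t * α + t * β + t * γ = t * (α + β + γ) := by ring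
      rw [this, hs, mul_one]
    linarith
  have hmem := er_mem_tri (a := p) (b := a) (c := b) ht hs1 hs2 hsum'
  have hxe : t • p + (u - t * α) • a + (v - t * β) • b = x := by
    rw [← hp, ← hx, ← htγ]; module
  rwa [hxe] at hmem

lemma er_cover {a b c p : ℂ} {α β γ : ℝ} (hα : 0 < α) (hβ : 0 < β) (hγ : 0 < γ)
    (hs : α + β + γ = 1) (hp : α • a + β • b + γ • c = p) :
    convexHull ℝ ({a,b,c} : Set ℂ) ⊆
      convexHull ℝ ({p,a,b} : Set ℂ) ∪ convexHull ℝ ({p,b,c} : Set ℂ) ∪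
        convexHull ℝ ({p,c,a} : Set ℂ) := by
  intro x hx
  obtain ⟨u, v, w, hu, hv, hw, hsum, hx⟩ := er_tri_mem hx
  have hpb : β • b + γ • c + α • a = p := by rw [← hp]; module
  have hpc : γ • c + α • a + β • b = p := by rw [← hp]; module
  have hxb : v • b + w • c + u • a = x := by rw [← hx]; module
  have hxc : w • c + u • a + v • b = x := by rw [← hx]; module
  rcases le_total (u*γ) (w*α) with h13 | h13
  · rcases le_total (u*β) (v*α) with h12 | h12
    · exact Or.inl (Or.inr (er_cover_aux hβ hγ hα (by linarith) hpb hv hw hu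
        (by linarith) hxb h12 h13))
    · refine Or.inr (er_cover_aux hγ hα hβ (by linarith) hpc hw hu hv (by linarith) hxc ?_ h12)
      rcases eq_or_lt_of_le hu with hu0 | hu0
      · have hv0 : v = 0 := le_antisymm (by nlinarith) hv
        rw [hv0]; simp [mul_nonneg hw hβ.le]
      · nlinarith
  · rcases le_total (v*γ) (w*β) with h23 | h23
    · refine Or.inr (er_cover_aux hγ hα hβ (by linarith) hpc hw hu hv (by linarith) hxc h23 ?_)
      rcases eq_or_lt_of_le hw with hw0 | hw0
      · have hv0 : v = 0 := le_antisymm (by nlinarith) hv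
        rw [hv0]; simp [mul_nonneg hu hβ.le]
      · nlinarith
    · exact Or.inl (Or.inl (er_cover_aux hα hβ hγ hs hp hu hv hw hsum hx h13 h23))

lemma er_overlap {a b c p : ℂ} (hnc : ¬Collinear ℝ ({a,b,c} : Set ℂ)) {α β γ : ℝ}
    (hα : 0 < α) (hβ : 0 < β) (hγ : 0 < γ)
    (hs : α + β + γ = 1) (hp : α • a + β • b + γ • c = p) :
    convexHull ℝ ({p,a,b} : Set ℂ) ∩ convexHull ℝ ({p,b,c} : Set ℂ) ⊆ segment ℝ p b := by
  rintro x ⟨h1, h2⟩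
  obtain ⟨t, s, r, ht, hs', hr, hts, hx1⟩ := er_tri_mem h1
  obtain ⟨t', r', q', ht', hr', hq', hts', hx2⟩ := er_tri_mem h2
  have key : t * α + t * β + t * γ = t := by
    have : t * α + t * β + t * γ = t * (α + β + γ) := by ring
    rw [this, hs, mul_one]
  have key' : t' * α + t' * β + t' * γ = t' := by
    have : t' * α + t' * β + t' * γ = t' * (α + β + γ) := by ring
    rw [this, hs, mul_one]
  have e1 : (s + t * α) • a + (r + t * β) • b + (t * γ) • c = x := by
    rw [← hx1, ← hp]; module
  have e2 : (t' * α) • a + (r' + t' * β) • b + (t' * γ + q') • c = x := by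
    rw [← hx2, ← hp]; module
  obtain ⟨ea, eb, ec⟩ := er_bary_unique hnc (by linarith) (by linarith) (e1.trans e2.symm)
  have htt : t = t' := by nlinarith
  have hs0 : s = 0 := by nlinarith
  subst htt
  refine ⟨t, r, ht, hr, by linarith, ?_⟩
  rw [← hx1, hs0]; module

lemma er_subset_of_diff_null {T C : Set ℂ} (hT : Convex ℝ T) (hTi : (interior T).Nonempty)
    (hC : IsClosed C) (h : (volume : Measure ℂ) (T \ C) = 0) : T ⊆ C := by
  intro v hv
  by_contra hvC
  obtain ⟨w, hw⟩ := hTi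
  obtain ⟨ε, hε, hball⟩ : ∃ ε > 0, Metric.ball v ε ⊆ Cᶜ :=
    Metric.isOpen_iff.mp hC.isOpen_compl v hvC
  set t : ℝ := min 1 (ε / (2 * (‖w - v‖ + 1))) with htdef
  have hwv : (0:ℝ) ≤ ‖w - v‖ := norm_nonneg _
  have ht0 : 0 < t := lt_min one_pos (by positivity)
  have ht1 : t ≤ 1 := min_le_left _ _
  set z : ℂ := t • w + (1 - t) • v with hzdef
  have hz : z ∈ interior T :=
    hT.combo_interior_closure_mem_interior hw (subset_closure hv) ht0 (by linarith) (by ring)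
  have hdzv : dist z v < ε := by
    have hzv : z - v = t • (w - v) := by rw [hzdef]; module
    rw [dist_eq_norm, hzv, norm_smul, Real.norm_of_nonneg ht0.le]
    have h2 : t ≤ ε / (2 * (‖w - v‖ + 1)) := min_le_right _ _
    have : t * ‖w - v‖ ≤ ε / (2 * (‖w - v‖ + 1)) * ‖w - v‖ :=
      mul_le_mul_of_nonneg_right h2 hwv
    have hlt : ε / (2 * (‖w - v‖ + 1)) * ‖w - v‖ < ε := by
      rw [div_mul_eq_mul_div, div_lt_iff₀ (by positivity)]
      nlinarith
    linarith
  obtain ⟨δ₁, hδ₁, hball₁⟩ := Metric.isOpen_iff.mp isOpen_interior z hz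
  set δ : ℝ := min δ₁ (ε - dist z v) with hδdef
  have hδ0 : 0 < δ := lt_min hδ₁ (by linarith)
  have hsub : Metric.ball z δ ⊆ T \ C := by
    intro y hy
    rw [Metric.mem_ball] at hy
    constructor
    · exact interior_subset (hball₁ (Metric.mem_ball.mpr (lt_of_lt_of_le hy (min_le_left _ _))))
    · have : dist y v < ε := by
        calc dist y v ≤ dist y z + dist z v := dist_triangle _ _ _
          _ < δ + dist z v := by linarith
          _ ≤ ε := by have h5 : δ ≤ ε - dist z v := min_le_right _ _; linarith
      have := hball (Metric.mem_ball.mpr this)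
      simpa using this
  have : (volume : Measure ℂ) (Metric.ball z δ) = 0 := measure_mono_null hsub h
  have hpos := Metric.measure_ball_pos (volume : Measure ℂ) z hδ0
  rw [this] at hpos
  exact lt_irrefl _ hpos

lemma er_coeFn_sum {ι : Type*} (s : Finset ι) (f : ι → Lp ℝ 1 (volume : Measure ℂ)) :
    ⇑(∑ i ∈ s, f i) =ᵐ[volume] fun x => ∑ i ∈ s, f i x := by
  induction s using Finset.cons_induction with
  | empty => simp only [Finset.sum_empty]; exact Lp.coeFn_zero ℝ 1 (volume : Measure ℂ)
  | cons i s hi ih =>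
    simp_rw [Finset.sum_cons]
    filter_upwards [Lp.coeFn_add (f i) (∑ j ∈ s, f j), ih] with x h1 h2
    rw [h1, Pi.add_apply, h2]

/-- The class in `L¹(ℂ, volume; ℝ)` of the indicator function of the triangle
`convexHull ℝ {a, b, c}`. -/
noncomputable def triL1 (a b c : ℂ) : Lp ℝ 1 (volume : Measure ℂ) :=
  indicatorConstLp 1
    (((Set.toFinite ({a, b, c} : Set ℂ)).isCompact_convexHull ℝ).isClosed.measurableSet)
    (((Set.toFinite ({a, b, c} : Set ℂ)).isCompact_convexHull ℝ).measure_lt_top.ne)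
    (1 : ℝ)

lemma er_triL1_coeFn (x y z : ℂ) :
    ⇑(triL1 x y z) =ᵐ[volume]
      (convexHull ℝ ({x,y,z} : Set ℂ)).indicator (fun _ => (1:ℝ)) :=
  indicatorConstLp_coeFn

lemma er_triL1_ne_zero {x y z : ℂ} (hnc : ¬Collinear ℝ ({x,y,z} : Set ℂ)) :
    triL1 x y z ≠ 0 := by
  intro h0
  have h1 := er_triL1_coeFn x y z
  rw [h0] at h1
  have h2 : ∀ᵐ w ∂(volume : Measure ℂ), w ∉ convexHull ℝ ({x,y,z} : Set ℂ) := by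
    filter_upwards [h1, Lp.coeFn_zero ℝ 1 (volume : Measure ℂ)] with w hw hz
    intro hmem
    rw [Set.indicator_of_mem hmem] at hw
    rw [hz] at hw
    norm_num at hw
  have := measure_eq_zero_iff_ae_notMem.mpr h2
  have hpos := er_tri_vol_pos hnc
  rw [this] at hpos
  exact lt_irrefl _ hpos

lemma er_triL1_congr {x y z a b c : ℂ} (h : ({x,y,z} : Set ℂ) = ({a,b,c} : Set ℂ)) :
    triL1 x y z = triL1 a b c := by
  apply Lp.ext
  filter_upwards [er_triL1_coeFn x y z, er_triL1_coeFn a b c] with w h1 h2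
  rw [h1, h2, h]

lemma er_triple_eq {x y z a b c : ℂ} (hx : x ∈ ({a,b,c} : Set ℂ)) (hy : y ∈ ({a,b,c} : Set ℂ))
    (hz : z ∈ ({a,b,c} : Set ℂ)) (hxy : x ≠ y) (hxz : x ≠ z) (hyz : y ≠ z) :
    ({x,y,z} : Set ℂ) = {a,b,c} := by
  simp only [Set.mem_insert_iff, Set.mem_singleton_iff] at hx hy hz
  rcases hx with rfl | rfl | rfl <;> rcases hy with rfl | rfl | rfl <;>
    rcases hz with rfl | rfl | rfl <;> simp_all <;> (ext w; simp; tauto)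

open Set in
lemma er_partition {a b c p : ℂ} (hnc : ¬Collinear ℝ ({a,b,c} : Set ℂ)) {α β γ : ℝ}
    (hα : 0 < α) (hβ : 0 < β) (hγ : 0 < γ)
    (hs : α + β + γ = 1) (hp : α • a + β • b + γ • c = p) :
    ∀ᵐ x ∂(volume : Measure ℂ),
      (convexHull ℝ ({p,a,b} : Set ℂ)).indicator (fun _ => (1:ℝ)) x +
      (convexHull ℝ ({p,b,c} : Set ℂ)).indicator (fun _ => (1:ℝ)) x +
      (convexHull ℝ ({p,c,a} : Set ℂ)).indicator (fun _ => (1:ℝ)) x =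
      (convexHull ℝ ({a,b,c} : Set ℂ)).indicator (fun _ => (1:ℝ)) x := by
  have hpmem : p ∈ convexHull ℝ ({a,b,c} : Set ℂ) := by
    rw [← hp]; exact er_mem_tri hα.le hβ.le hγ.le hs
  have hsub : ∀ x y : ℂ, x ∈ convexHull ℝ ({a,b,c} : Set ℂ) →
      y ∈ convexHull ℝ ({a,b,c} : Set ℂ) →
      convexHull ℝ ({p,x,y} : Set ℂ) ⊆ convexHull ℝ ({a,b,c} : Set ℂ) := by
    intro x y hx hy
    apply convexHull_min _ (convex_convexHull ℝ _)
    rintro q (rfl | rfl | rfl)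
    exacts [hpmem, hx, hy]
  have hamem : a ∈ convexHull ℝ ({a,b,c} : Set ℂ) := subset_convexHull ℝ _ (by simp)
  have hbmem : b ∈ convexHull ℝ ({a,b,c} : Set ℂ) := subset_convexHull ℝ _ (by simp)
  have hcmem : c ∈ convexHull ℝ ({a,b,c} : Set ℂ) := subset_convexHull ℝ _ (by simp)
  have hsetb : ({b,c,a} : Set ℂ) = ({a,b,c} : Set ℂ) := by ext w; simp; tauto
  have hsetc : ({c,a,b} : Set ℂ) = ({a,b,c} : Set ℂ) := by ext w; simp; tauto
  have hncb : ¬Collinear ℝ ({b,c,a} : Set ℂ) := by rw [hsetb]; exact hnc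
  have hncc : ¬Collinear ℝ ({c,a,b} : Set ℂ) := by rw [hsetc]; exact hnc
  have hpb : β • b + γ • c + α • a = p := by rw [← hp]; module
  have hpc : γ • c + α • a + β • b = p := by rw [← hp]; module
  have o1 : (volume : Measure ℂ)
      (convexHull ℝ ({p,a,b} : Set ℂ) ∩ convexHull ℝ ({p,b,c} : Set ℂ)) = 0 :=
    measure_mono_null (er_overlap hnc hα hβ hγ hs hp) (er_seg_vol_zero p b)
  have o2 : (volume : Measure ℂ)
      (convexHull ℝ ({p,b,c} : Set ℂ) ∩ convexHull ℝ ({p,c,a} : Set ℂ)) = 0 :=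
    measure_mono_null (er_overlap hncb hβ hγ hα (by linarith) hpb) (er_seg_vol_zero p c)
  have o3 : (volume : Measure ℂ)
      (convexHull ℝ ({p,c,a} : Set ℂ) ∩ convexHull ℝ ({p,a,b} : Set ℂ)) = 0 :=
    measure_mono_null (er_overlap hncc hγ hα hβ (by linarith) hpc) (er_seg_vol_zero p a)
  have h1 : ∀ᵐ x ∂(volume : Measure ℂ),
      x ∉ convexHull ℝ ({p,a,b} : Set ℂ) ∩ convexHull ℝ ({p,b,c} : Set ℂ) :=
    measure_eq_zero_iff_ae_notMem.mp o1
  have h2 : ∀ᵐ x ∂(volume : Measure ℂ),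
      x ∉ convexHull ℝ ({p,b,c} : Set ℂ) ∩ convexHull ℝ ({p,c,a} : Set ℂ) :=
    measure_eq_zero_iff_ae_notMem.mp o2
  have h3 : ∀ᵐ x ∂(volume : Measure ℂ),
      x ∉ convexHull ℝ ({p,c,a} : Set ℂ) ∩ convexHull ℝ ({p,a,b} : Set ℂ) :=
    measure_eq_zero_iff_ae_notMem.mp o3
  filter_upwards [h1, h2, h3] with x hx1 hx2 hx3
  by_cases hxm : x ∈ convexHull ℝ ({a,b,c} : Set ℂ)
  · rcases er_cover hα hβ hγ hs hp hxm with (hT | hT) | hT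
    · have n2 : x ∉ convexHull ℝ ({p,b,c} : Set ℂ) := fun hc => hx1 ⟨hT, hc⟩
      have n3 : x ∉ convexHull ℝ ({p,c,a} : Set ℂ) := fun hc => hx3 ⟨hc, hT⟩
      rw [Set.indicator_of_mem hT, Set.indicator_of_notMem n2, Set.indicator_of_notMem n3,
        Set.indicator_of_mem hxm]
      norm_num
    · have n1 : x ∉ convexHull ℝ ({p,a,b} : Set ℂ) := fun hc => hx1 ⟨hc, hT⟩
      have n3 : x ∉ convexHull ℝ ({p,c,a} : Set ℂ) := fun hc => hx2 ⟨hT, hc⟩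
      rw [Set.indicator_of_notMem n1, Set.indicator_of_mem hT, Set.indicator_of_notMem n3,
        Set.indicator_of_mem hxm]
      norm_num
    · have n1 : x ∉ convexHull ℝ ({p,a,b} : Set ℂ) := fun hc => hx3 ⟨hT, hc⟩
      have n2 : x ∉ convexHull ℝ ({p,b,c} : Set ℂ) := fun hc => hx2 ⟨hc, hT⟩
      rw [Set.indicator_of_notMem n1, Set.indicator_of_notMem n2, Set.indicator_of_mem hT,
        Set.indicator_of_mem hxm]
      norm_num
  · have n1 : x ∉ convexHull ℝ ({p,a,b} : Set ℂ) := fun hc => hxm (hsub a b hamem hbmem hc)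
    have n2 : x ∉ convexHull ℝ ({p,b,c} : Set ℂ) := fun hc => hxm (hsub b c hbmem hcmem hc)
    have n3 : x ∉ convexHull ℝ ({p,c,a} : Set ℂ) := fun hc => hxm (hsub c a hcmem hamem hc)
    rw [Set.indicator_of_notMem n1, Set.indicator_of_notMem n2, Set.indicator_of_notMem n3,
      Set.indicator_of_notMem hxm]
    norm_num

lemma er_coeFn_combo {m : ℕ} (t : Fin m → ℂ × ℂ × ℂ) (coef : Fin m → ℝ) :
    ⇑(∑ i, coef i • triL1 (t i).1 (t i).2.1 (t i).2.2) =ᵐ[volume]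
      fun x => ∑ i, coef i *
        (convexHull ℝ ({(t i).1, (t i).2.1, (t i).2.2} : Set ℂ)).indicator (fun _ => (1:ℝ)) x := by
  have H : ∀ᵐ x ∂(volume : Measure ℂ), ∀ i : Fin m,
      (coef i • triL1 (t i).1 (t i).2.1 (t i).2.2) x = coef i *
        (convexHull ℝ ({(t i).1, (t i).2.1, (t i).2.2} : Set ℂ)).indicator (fun _ => (1:ℝ)) x := by
    rw [MeasureTheory.ae_all_iff]
    intro i
    filter_upwards [Lp.coeFn_smul (coef i) (triL1 (t i).1 (t i).2.1 (t i).2.2),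
      er_triL1_coeFn (t i).1 (t i).2.1 (t i).2.2] with x e1 e2
    rw [e1, Pi.smul_apply, e2, smul_eq_mul]
  filter_upwards [er_coeFn_sum Finset.univ
    (fun i => coef i • triL1 (t i).1 (t i).2.1 (t i).2.2), H] with x e1 e2
  rw [e1]
  exact Finset.sum_congr rfl fun i _ => e2 i

lemma er_combo_eq_smul {S : Set ℂ}
    (hnd : ∀ a ∈ S, ∀ b ∈ S, ∀ c ∈ S, a ≠ b → a ≠ c → b ≠ c →
      ¬Collinear ℝ ({a, b, c} : Set ℂ))
    {a b c : ℂ} (hS : convexHull ℝ ({a, b, c} : Set ℂ) ∩ S = {a, b, c})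
    {m : ℕ} {t : Fin m → ℂ × ℂ × ℂ} {coef : Fin m → ℝ}
    (hts : ∀ i, (t i).1 ∈ S ∧ (t i).2.1 ∈ S ∧ (t i).2.2 ∈ S ∧
        (t i).1 ≠ (t i).2.1 ∧ (t i).1 ≠ (t i).2.2 ∧ (t i).2.1 ≠ (t i).2.2)
    (hcoef : ∀ i, 0 ≤ coef i)
    {rest : ℂ → ℝ} (hrest : ∀ x, 0 ≤ rest x)
    (heq : ∀ᵐ x ∂(volume : Measure ℂ),
      (∑ i, coef i *
        (convexHull ℝ ({(t i).1, (t i).2.1, (t i).2.2} : Set ℂ)).indicator (fun _ => (1:ℝ)) x)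
      + rest x = (convexHull ℝ ({a,b,c} : Set ℂ)).indicator (fun _ => (1:ℝ)) x) :
    ∑ i, coef i • triL1 (t i).1 (t i).2.1 (t i).2.2 = (∑ i, coef i) • triL1 a b c := by
  have hterm : ∀ i, coef i • triL1 (t i).1 (t i).2.1 (t i).2.2 = coef i • triL1 a b c := by
    intro i
    rcases eq_or_lt_of_le (hcoef i) with h0 | hpos
    · rw [← h0, zero_smul, zero_smul]
    obtain ⟨hv1, hv2, hv3, hd12, hd13, hd23⟩ := hts i
    have hncT : ¬Collinear ℝ ({(t i).1, (t i).2.1, (t i).2.2} : Set ℂ) :=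
      hnd _ hv1 _ hv2 _ hv3 hd12 hd13 hd23
    have hdiff : (volume : Measure ℂ)
        (convexHull ℝ ({(t i).1, (t i).2.1, (t i).2.2} : Set ℂ) \
          convexHull ℝ ({a,b,c} : Set ℂ)) = 0 := by
      rw [measure_eq_zero_iff_ae_notMem]
      filter_upwards [heq] with x hx
      rintro ⟨hxT, hxA⟩
      have hnn : ∀ j : Fin m, 0 ≤ coef j *
          (convexHull ℝ ({(t j).1, (t j).2.1, (t j).2.2} : Set ℂ)).indicator
            (fun _ => (1:ℝ)) x :=
        fun j => mul_nonneg (hcoef j) (Set.indicator_nonneg (fun _ _ => zero_le_one) x)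
      have hle : coef i *
          (convexHull ℝ ({(t i).1, (t i).2.1, (t i).2.2} : Set ℂ)).indicator
            (fun _ => (1:ℝ)) x ≤
          ∑ j, coef j *
            (convexHull ℝ ({(t j).1, (t j).2.1, (t j).2.2} : Set ℂ)).indicator
              (fun _ => (1:ℝ)) x :=
        Finset.single_le_sum (fun j _ => hnn j) (Finset.mem_univ i)
      rw [Set.indicator_of_mem hxT] at hle
      rw [Set.indicator_of_notMem hxA] at hx
      have := hrest x
      nlinarith
    have hTsub : convexHull ℝ ({(t i).1, (t i).2.1, (t i).2.2} : Set ℂ) ⊆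
        convexHull ℝ ({a,b,c} : Set ℂ) :=
      er_subset_of_diff_null (convex_convexHull ℝ _) (er_tri_interior_nonempty hncT)
        ((Set.toFinite ({a, b, c} : Set ℂ)).isCompact_convexHull ℝ).isClosed hdiff
    have hmem : ∀ q ∈ ({(t i).1, (t i).2.1, (t i).2.2} : Set ℂ), q ∈ ({a,b,c} : Set ℂ) := by
      intro q hq
      have h1 : q ∈ convexHull ℝ ({a,b,c} : Set ℂ) := hTsub (subset_convexHull ℝ _ hq)
      have h2 : q ∈ S := by
        rcases hq with rfl | rfl | rfl
        exacts [hv1, hv2, hv3]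
      rw [← hS]; exact ⟨h1, h2⟩
    have hset := er_triple_eq (hmem _ (by simp)) (hmem _ (by simp)) (hmem _ (by simp))
      hd12 hd13 hd23
    rw [er_triL1_congr hset]
  rw [Finset.sum_congr rfl (fun i _ => hterm i), ← Finset.sum_smul]

/-- Let `S ⊂ ℂ` be a finite nondegenerate set with at least 3 points and
let `K ⊆ L¹(ℂ)` be the convex cone of nonnegative combinations of indicators of triangles
with vertices in `S`. A triangle with vertices `a, b, c ∈ S` spans an extreme ray of `K`
if and only if it contains no point of `S` other than its own vertices. -/
theorem extreme_ray_iff_no_interior_node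
    (S : Set ℂ) (hfin : S.Finite) (hcard : 3 ≤ S.ncard)
    (hnd : ∀ a ∈ S, ∀ b ∈ S, ∀ c ∈ S, a ≠ b → a ≠ c → b ≠ c →
      ¬Collinear ℝ ({a, b, c} : Set ℂ))
    (K : Set (Lp ℝ 1 (volume : Measure ℂ)))
    (hK : K = {g | ∃ (m : ℕ) (t : Fin m → ℂ × ℂ × ℂ) (coef : Fin m → ℝ),
      (∀ i, (t i).1 ∈ S ∧ (t i).2.1 ∈ S ∧ (t i).2.2 ∈ S ∧
        (t i).1 ≠ (t i).2.1 ∧ (t i).1 ≠ (t i).2.2 ∧ (t i).2.1 ≠ (t i).2.2) ∧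
      (∀ i, 0 ≤ coef i) ∧
      g = ∑ i, coef i • triL1 (t i).1 (t i).2.1 (t i).2.2})
    (a b c : ℂ) (ha : a ∈ S) (hb : b ∈ S) (hc : c ∈ S)
    (hab : a ≠ b) (hac : a ≠ c) (hbc : b ≠ c) :
    (triL1 a b c ≠ 0 ∧
      ∀ g ∈ K, ∀ h ∈ K, g + h = triL1 a b c →
        (∃ s : ℝ, 0 ≤ s ∧ g = s • triL1 a b c) ∧
        (∃ t : ℝ, 0 ≤ t ∧ h = t • triL1 a b c)) ↔
    convexHull ℝ ({a, b, c} : Set ℂ) ∩ S = {a, b, c} := by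
  have hnc : ¬Collinear ℝ ({a,b,c} : Set ℂ) := hnd a ha b hb c hc hab hac hbc
  constructor
  · rintro ⟨hne, hext⟩
    apply Set.Subset.antisymm
    · rintro p ⟨hpC, hpS⟩
      by_contra hpmem
      simp only [Set.mem_insert_iff, Set.mem_singleton_iff] at hpmem
      push_neg at hpmem
      obtain ⟨hpa, hpb, hpc⟩ := hpmem
      obtain ⟨α, β, γ, hα0, hβ0, hγ0, hsum, hp⟩ := er_tri_mem hpC
      have hα : 0 < α := by
        rcases eq_or_lt_of_le hα0 with h0 | h
        swap
        · exact h
        exfalso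
        have hseg : p ∈ segment ℝ b c :=
          ⟨β, γ, hβ0, hγ0, by linarith, by rw [← hp, ← h0]; simp⟩
        have hline : p ∈ line[ℝ, b, c] := convexHull_subset_affineSpan _ (by
          rw [convexHull_pair]; exact hseg)
        exact hnd p hpS b hb c hc hpb hpc hbc (collinear_insert_of_mem_affineSpan_pair hline)
      have hβ : 0 < β := by
        rcases eq_or_lt_of_le hβ0 with h0 | h
        swap
        · exact h
        exfalso
        have hseg : p ∈ segment ℝ a c :=
          ⟨α, γ, hα0, hγ0, by linarith, by rw [← hp, ← h0]; simp⟩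
        have hline : p ∈ line[ℝ, a, c] := convexHull_subset_affineSpan _ (by
          rw [convexHull_pair]; exact hseg)
        exact hnd p hpS a ha c hc hpa hpc hac (collinear_insert_of_mem_affineSpan_pair hline)
      have hγ : 0 < γ := by
        rcases eq_or_lt_of_le hγ0 with h0 | h
        swap
        · exact h
        exfalso
        have hseg : p ∈ segment ℝ a b :=
          ⟨α, β, hα0, hβ0, by linarith, by rw [← hp, ← h0]; simp⟩
        have hline : p ∈ line[ℝ, a, b] := convexHull_subset_affineSpan _ (by
          rw [convexHull_pair]; exact hseg)
        exact hnd p hpS a ha b hb hpa hpb hab (collinear_insert_of_mem_affineSpan_pair hline)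
      have hg1K : triL1 p a b ∈ K := by
        rw [hK]
        refine ⟨1, fun _ => (p,a,b), fun _ => 1,
          fun i => ⟨hpS, ha, hb, hpa, hpb, hab⟩, fun i => zero_le_one, ?_⟩
        simp
      have hh1K : triL1 p b c + triL1 p c a ∈ K := by
        rw [hK]
        refine ⟨2, ![(p,b,c),(p,c,a)], fun _ => 1, ?_, fun i => zero_le_one, ?_⟩
        · intro i; fin_cases i
          · exact ⟨hpS, hb, hc, hpb, hpc, hbc⟩
          · exact ⟨hpS, hc, ha, hpc, hpa, Ne.symm hac⟩
        · rw [Fin.sum_univ_two]; simp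
      have hsum1 : triL1 p a b + (triL1 p b c + triL1 p c a) = triL1 a b c := by
        apply Lp.ext
        filter_upwards [Lp.coeFn_add (triL1 p a b) (triL1 p b c + triL1 p c a),
          Lp.coeFn_add (triL1 p b c) (triL1 p c a),
          er_triL1_coeFn p a b, er_triL1_coeFn p b c, er_triL1_coeFn p c a,
          er_triL1_coeFn a b c, er_partition hnc hα hβ hγ hsum hp]
          with x e1 e2 e3 e4 e5 e6 e7
        rw [e1, Pi.add_apply, e2, Pi.add_apply, e3, e4, e5, e6]
        linarith
      obtain ⟨⟨s, hs0, hgs⟩, -⟩ := hext _ hg1K _ hh1K hsum1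
      have hncpab : ¬Collinear ℝ ({p,a,b} : Set ℂ) := hnd p hpS a ha b hb hpa hpb hab
      have hncpbc : ¬Collinear ℝ ({p,b,c} : Set ℂ) := hnd p hpS b hb c hc hpb hpc hbc
      have haeg : ∀ᵐ x ∂(volume : Measure ℂ),
          (convexHull ℝ ({p,a,b} : Set ℂ)).indicator (fun _ => (1:ℝ)) x =
            s * (convexHull ℝ ({a,b,c} : Set ℂ)).indicator (fun _ => (1:ℝ)) x := by
        have hcg : ⇑(triL1 p a b) =ᵐ[volume] ⇑(s • triL1 a b c) := by rw [hgs]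
        filter_upwards [hcg, Lp.coeFn_smul s (triL1 a b c), er_triL1_coeFn p a b,
          er_triL1_coeFn a b c] with x e1 e2 e3 e4
        rw [← e3, e1, e2, Pi.smul_apply, e4, smul_eq_mul]
      have o1 : (volume : Measure ℂ)
          (convexHull ℝ ({p,b,c} : Set ℂ) ∩ convexHull ℝ ({p,a,b} : Set ℂ)) = 0 := by
        rw [Set.inter_comm]
        exact measure_mono_null (er_overlap hnc hα hβ hγ hsum hp) (er_seg_vol_zero p b)
      have hDpos : 0 < (volume : Measure ℂ)
          (convexHull ℝ ({p,b,c} : Set ℂ) \ convexHull ℝ ({p,a,b} : Set ℂ)) := by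
        rw [measure_diff_null' o1]
        exact er_tri_vol_pos hncpbc
      have hsubpbc : convexHull ℝ ({p,b,c} : Set ℂ) ⊆ convexHull ℝ ({a,b,c} : Set ℂ) := by
        apply convexHull_min _ (convex_convexHull ℝ _)
        rintro q (rfl | rfl | rfl)
        exacts [hpC, subset_convexHull ℝ _ (by simp), subset_convexHull ℝ _ (by simp)]
      have hbad := MeasureTheory.ae_iff.mp haeg
      have hex : ∃ x, x ∈ (convexHull ℝ ({p,b,c} : Set ℂ) \ convexHull ℝ ({p,a,b} : Set ℂ)) ∧
          (convexHull ℝ ({p,a,b} : Set ℂ)).indicator (fun _ => (1:ℝ)) x =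
            s * (convexHull ℝ ({a,b,c} : Set ℂ)).indicator (fun _ => (1:ℝ)) x := by
        by_contra hno
        push_neg at hno
        have hsubbad : (convexHull ℝ ({p,b,c} : Set ℂ) \ convexHull ℝ ({p,a,b} : Set ℂ)) ⊆
            {x | ¬((convexHull ℝ ({p,a,b} : Set ℂ)).indicator (fun _ => (1:ℝ)) x =
              s * (convexHull ℝ ({a,b,c} : Set ℂ)).indicator (fun _ => (1:ℝ)) x)} :=
          fun x hx => hno x hx
        have hz := measure_mono_null hsubbad hbad
        rw [hz] at hDpos
        exact lt_irrefl _ hDpos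
      obtain ⟨x, ⟨hxin, hxout⟩, hxeq⟩ := hex
      have hxabc : x ∈ convexHull ℝ ({a,b,c} : Set ℂ) := hsubpbc hxin
      rw [Set.indicator_of_notMem hxout, Set.indicator_of_mem hxabc] at hxeq
      have hszero : s = 0 := by linarith [hxeq]
      rw [hszero, zero_smul] at hgs
      exact er_triL1_ne_zero hncpab hgs
    · rintro x (rfl | rfl | rfl)
      exacts [⟨subset_convexHull ℝ _ (by simp), ha⟩, ⟨subset_convexHull ℝ _ (by simp), hb⟩,
        ⟨subset_convexHull ℝ _ (by simp), hc⟩]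
  · intro hS
    refine ⟨er_triL1_ne_zero hnc, ?_⟩
    intro g hg h hh hghsum
    rw [hK] at hg hh
    obtain ⟨m1, t1, c1, hts1, hc1, hgdef⟩ := hg
    obtain ⟨m2, t2, c2, hts2, hc2, hhdef⟩ := hh
    have hae : ∀ᵐ x ∂(volume : Measure ℂ),
        (∑ i, c1 i * (convexHull ℝ
          ({(t1 i).1, (t1 i).2.1, (t1 i).2.2} : Set ℂ)).indicator (fun _ => (1:ℝ)) x)
        + (∑ j, c2 j * (convexHull ℝ
          ({(t2 j).1, (t2 j).2.1, (t2 j).2.2} : Set ℂ)).indicator (fun _ => (1:ℝ)) x)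
        = (convexHull ℝ ({a,b,c} : Set ℂ)).indicator (fun _ => (1:ℝ)) x := by
      have h0 : ⇑(g + h) =ᵐ[volume] ⇑(triL1 a b c) := by rw [hghsum]
      have e2' : ⇑g =ᵐ[volume] fun x => ∑ i, c1 i * (convexHull ℝ
          ({(t1 i).1, (t1 i).2.1, (t1 i).2.2} : Set ℂ)).indicator (fun _ => (1:ℝ)) x := by
        rw [hgdef]; exact er_coeFn_combo t1 c1
      have e3' : ⇑h =ᵐ[volume] fun x => ∑ j, c2 j * (convexHull ℝ
          ({(t2 j).1, (t2 j).2.1, (t2 j).2.2} : Set ℂ)).indicator (fun _ => (1:ℝ)) x := by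
        rw [hhdef]; exact er_coeFn_combo t2 c2
      filter_upwards [h0, Lp.coeFn_add g h, e2', e3', er_triL1_coeFn a b c]
        with x e0 e1 e2 e3 e4
      rw [← e2, ← e3, ← e4, ← e0, e1, Pi.add_apply]
    have hrest1 : ∀ x : ℂ, 0 ≤ ∑ i, c1 i * (convexHull ℝ
        ({(t1 i).1, (t1 i).2.1, (t1 i).2.2} : Set ℂ)).indicator (fun _ => (1:ℝ)) x :=
      fun x => Finset.sum_nonneg fun i _ =>
        mul_nonneg (hc1 i) (Set.indicator_nonneg (fun _ _ => zero_le_one) x)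
    have hrest2 : ∀ x : ℂ, 0 ≤ ∑ j, c2 j * (convexHull ℝ
        ({(t2 j).1, (t2 j).2.1, (t2 j).2.2} : Set ℂ)).indicator (fun _ => (1:ℝ)) x :=
      fun x => Finset.sum_nonneg fun j _ =>
        mul_nonneg (hc2 j) (Set.indicator_nonneg (fun _ _ => zero_le_one) x)
    have hg' := er_combo_eq_smul hnd hS hts1 hc1 hrest2 hae
    have hae2 : ∀ᵐ x ∂(volume : Measure ℂ),
        (∑ j, c2 j * (convexHull ℝ
          ({(t2 j).1, (t2 j).2.1, (t2 j).2.2} : Set ℂ)).indicator (fun _ => (1:ℝ)) x)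
        + (∑ i, c1 i * (convexHull ℝ
          ({(t1 i).1, (t1 i).2.1, (t1 i).2.2} : Set ℂ)).indicator (fun _ => (1:ℝ)) x)
        = (convexHull ℝ ({a,b,c} : Set ℂ)).indicator (fun _ => (1:ℝ)) x := by
      filter_upwards [hae] with x e
      linarith
    have hh' := er_combo_eq_smul hnd hS hts2 hc2 hrest1 hae2
    exact ⟨⟨∑ i, c1 i, Finset.sum_nonneg (fun i _ => hc1 i), by rw [hgdef, hg']⟩,
      ⟨∑ j, c2 j, Finset.sum_nonneg (fun j _ => hc2 j), by rw [hhdef, hh']⟩⟩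
end

section
/- Let α, β, γ ∈ ℂ be non-collinear points. Let δ be a point strictly between α and γ, let ε be a point strictly between β and γ, and let ζ be a point lying both strictly between α and ε and strictly between β and δ (the intersection point of the two secants αε and βδ). Then volume(convexHull ℝ {α, β, ζ}) > volume(convexHull ℝ {ε, δ, ζ}). -/
open MeasureTheory

/-- Let `α, β, γ ∈ ℂ` be non-collinear, let `δ` lie strictly between `α`
and `γ`, let `ε` lie strictly between `β` and `γ`, and let `ζ` be the intersection point of
the secants `αε` and `βδ` (so `ζ` is strictly between `α` and `ε` and strictly between `β`
and `δ`). Then the triangle `αβζ` has strictly larger area than the triangle `εδζ`. -/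
theorem area_secant_triangle_lt
    (α β γ δ ε ζ : ℂ)
    (hcol : ¬Collinear ℝ ({α, β, γ} : Set ℂ))
    (hδ : Sbtw ℝ α δ γ) (hε : Sbtw ℝ β ε γ)
    (hζ1 : Sbtw ℝ α ζ ε) (hζ2 : Sbtw ℝ β ζ δ) :
    volume (convexHull ℝ ({ε, δ, ζ} : Set ℂ)) <
      volume (convexHull ℝ ({α, β, ζ} : Set ℂ)) := by
  obtain ⟨t, ht, htζ⟩ := hζ1.mem_image_Ioo
  obtain ⟨s, hs, hsζ⟩ := hζ2.mem_image_Ioo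
  obtain ⟨u, hu, huδ⟩ := hδ.mem_image_Ioo
  obtain ⟨v, hv, hvε⟩ := hε.mem_image_Ioo
  rw [AffineMap.lineMap_apply_module] at htζ hsζ huδ hvε
  simp only [Complex.real_smul, Complex.ofReal_sub, Complex.ofReal_one] at htζ hsζ huδ hvε
  obtain ⟨ht0, ht1⟩ := ht
  obtain ⟨hs0, hs1⟩ := hs
  obtain ⟨hv0, hv1⟩ := hv
  -- linear independence of β - α, γ - α
  have hBC : ∀ a b : ℝ, (a : ℂ) * (β - α) + (b : ℂ) * (γ - α) = 0 → a = 0 ∧ b = 0 := by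
    intro a b hab
    by_contra hcon
    apply hcol
    rw [collinear_iff_exists_forall_eq_smul_vadd]
    rcases eq_or_ne a 0 with ha | ha
    · have hb : b ≠ 0 := by tauto
      have hb' : (b : ℂ) ≠ 0 := Complex.ofReal_ne_zero.2 hb
      have hγ : γ = α := by
        have h0 : (b : ℂ) * (γ - α) = 0 := by
          rw [ha] at hab; simpa using hab
        rcases mul_eq_zero.1 h0 with h | h
        · exact absurd h hb'
        · exact sub_eq_zero.1 h
      refine ⟨α, β - α, ?_⟩
      intro p hp
      simp only [Set.mem_insert_iff, Set.mem_singleton_iff] at hp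
      rcases hp with rfl | rfl | rfl
      · exact ⟨0, by simp⟩
      · exact ⟨1, by simp [Complex.real_smul]⟩
      · exact ⟨0, by simp [hγ]⟩
    · have ha' : (a : ℂ) ≠ 0 := Complex.ofReal_ne_zero.2 ha
      refine ⟨α, γ - α, ?_⟩
      intro p hp
      simp only [Set.mem_insert_iff, Set.mem_singleton_iff] at hp
      rcases hp with rfl | rfl | rfl
      · exact ⟨0, by simp⟩
      · refine ⟨-b / a, ?_⟩
        simp only [vadd_eq_add, Complex.real_smul]
        push_cast
        field_simp
        linear_combination hab
      · exact ⟨1, by simp [Complex.real_smul]⟩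
  -- key linear relation for ζ - α
  have hζα : ζ - α = ((t : ℂ) * (1 - (v : ℂ))) * (β - α) + ((t : ℂ) * (v : ℂ)) * (γ - α) := by
    linear_combination -htζ - (t : ℂ) * hvε
  -- coefficient relations
  obtain ⟨h1, h2⟩ := hBC (t * (1 - v) - (1 - s)) (t * v - s * u) (by
    push_cast
    linear_combination htζ + (t : ℂ) * hvε - hsζ - (s : ℂ) * huδ)
  have h1' : t * (1 - v) = 1 - s := by linarith
  have hst : 1 < t + s := by nlinarith [mul_pos ht0 hv0]
  -- linear independence of α - ζ, β - ζ
  have key : ∀ a b : ℝ, a • (α - ζ) + b • (β - ζ) = 0 → a = 0 ∧ b = 0 := by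
    intro a b hab
    rw [Complex.real_smul, Complex.real_smul] at hab
    obtain ⟨e1, e2⟩ := hBC (b - (a + b) * (t * (1 - v))) (-(a + b) * (t * v)) (by
      push_cast
      linear_combination hab + ((a : ℂ) + (b : ℂ)) * hζα)
    have hsum : a + b = 0 := by
      have htv : t * v ≠ 0 := by positivity
      have : (a + b) * (t * v) = 0 := by linarith
      rcases mul_eq_zero.1 this with h | h
      · exact h
      · exact absurd h htv
    have hb : b = 0 := by nlinarith [e1, hsum]
    exact ⟨by linarith, hb⟩
  have li : LinearIndependent ℝ ![α - ζ, β - ζ] := LinearIndependent.pair_iff.2 key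
  -- basis from this pair
  let bB : Module.Basis (Fin 2) ℝ ℂ := basisOfLinearIndependentOfCardEqFinrank li
    (by simp [Complex.finrank_real_complex])
  have hbB0 : bB 0 = α - ζ := by
    simp [bB, coe_basisOfLinearIndependentOfCardEqFinrank]
  have hbB1 : bB 1 = β - ζ := by
    simp [bB, coe_basisOfLinearIndependentOfCardEqFinrank]
  set c₁ : ℝ := -((1 - t) / t) with hc₁
  set c₂ : ℝ := -((1 - s) / s) with hc₂
  let M : ℂ →ₗ[ℝ] ℂ := bB.constr ℝ ![c₁ • (α - ζ), c₂ • (β - ζ)]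
  have hM0 : M (α - ζ) = c₁ • (α - ζ) := by
    have h := bB.constr_basis ℝ ![c₁ • (α - ζ), c₂ • (β - ζ)] 0
    rw [hbB0, Matrix.cons_val_zero] at h
    exact h
  have hM1 : M (β - ζ) = c₂ • (β - ζ) := by
    have h := bB.constr_basis ℝ ![c₁ • (α - ζ), c₂ • (β - ζ)] 1
    rw [hbB1, Matrix.cons_val_one, Matrix.cons_val_zero] at h
    exact h
  have hMb : ∀ j : Fin 2, M (bB j) = (![c₁, c₂] j) • bB j := by
    intro j
    fin_cases j
    · show M (bB 0) = c₁ • bB 0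
      rw [hbB0, hM0]
    · show M (bB 1) = c₂ • bB 1
      rw [hbB1, hM1]
  have hdet : LinearMap.det M = c₁ * c₂ := by
    have hmat : LinearMap.toMatrix bB bB M = Matrix.diagonal ![c₁, c₂] := by
      ext i j
      rw [LinearMap.toMatrix_apply, hMb j, _root_.map_smul, Finsupp.smul_apply,
        Module.Basis.repr_self]
      rcases eq_or_ne i j with rfl | hij
      · simp
      · simp [Matrix.diagonal_apply_ne _ hij, Finsupp.single_apply, Ne.symm hij]
    rw [← LinearMap.det_toMatrix bB, hmat, Matrix.det_diagonal]
    simp [Fin.prod_univ_two]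
  -- the affine map
  let A : ℂ →ᵃ[ℝ] ℂ :=
    { toFun := fun x => M (x - ζ) + ζ
      linear := M
      map_vadd' := by
        intro p w
        simp only [vadd_eq_add, add_sub_assoc, map_add]
        ring }
  have ht0' : (t : ℂ) ≠ 0 := Complex.ofReal_ne_zero.2 (ne_of_gt ht0)
  have hs0' : (s : ℂ) ≠ 0 := Complex.ofReal_ne_zero.2 (ne_of_gt hs0)
  have hAα : A α = ε := by
    show M (α - ζ) + ζ = ε
    rw [hM0, Complex.real_smul, hc₁]
    push_cast
    field_simp
    linear_combination -htζ
  have hAβ : A β = δ := by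
    show M (β - ζ) + ζ = δ
    rw [hM1, Complex.real_smul, hc₂]
    push_cast
    field_simp
    linear_combination -hsζ
  have hAζ : A ζ = ζ := by
    show M (ζ - ζ) + ζ = ζ
    simp
  have hull_eq : convexHull ℝ ({ε, δ, ζ} : Set ℂ) = ⇑A '' convexHull ℝ ({α, β, ζ} : Set ℂ) := by
    rw [AffineMap.image_convexHull, Set.image_insert_eq, Set.image_insert_eq,
      Set.image_singleton, hAα, hAβ, hAζ]
  -- volume of the image
  have hvolA : ∀ S : Set ℂ,
      volume (⇑A '' S) = ENNReal.ofReal |LinearMap.det M| * volume S := by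
    intro S
    have h1 : ⇑A '' S = (fun x => x + ζ) '' (⇑M '' ((fun x => x + -ζ) '' S)) := by
      simp only [Set.image_image]
      rfl
    rw [h1, Set.image_add_right, measure_preimage_add_right,
      Measure.addHaar_image_linearMap, Set.image_add_right, neg_neg,
      measure_preimage_add_right]
  -- positivity and finiteness of the big triangle's volume
  have hspan : affineSpan ℝ ({α, β, ζ} : Set ℂ) = ⊤ := by
    rw [AffineSubspace.affineSpan_eq_top_iff_vectorSpan_eq_top_of_nonempty ℝ ℂ ℂ ⟨α, by simp⟩]
    apply Submodule.eq_top_of_finrank_eq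
    rw [Complex.finrank_real_complex]
    have hle : Submodule.span ℝ (Set.range ![α - ζ, β - ζ]) ≤
        vectorSpan ℝ ({α, β, ζ} : Set ℂ) := by
      rw [Submodule.span_le]
      rintro x ⟨i, rfl⟩
      fin_cases i
      · exact vsub_mem_vectorSpan ℝ (by simp) (by simp)
      · exact vsub_mem_vectorSpan ℝ (by simp) (by simp)
    have h2 : Module.finrank ℝ
        (Submodule.span ℝ (Set.range ![α - ζ, β - ζ])) = 2 := by
      rw [finrank_span_eq_card li]; simp
    have hge : 2 ≤ Module.finrank ℝ (vectorSpan ℝ ({α, β, ζ} : Set ℂ)) :=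
      h2 ▸ Submodule.finrank_mono hle
    have hle2 : Module.finrank ℝ (vectorSpan ℝ ({α, β, ζ} : Set ℂ)) ≤ 2 :=
      Complex.finrank_real_complex ▸ Submodule.finrank_le _
    omega
  have hpos : 0 < volume (convexHull ℝ ({α, β, ζ} : Set ℂ)) := by
    apply MeasureTheory.Measure.measure_pos_of_nonempty_interior
    rw [(convex_convexHull ℝ _).interior_nonempty_iff_affineSpan_eq_top,
      affineSpan_convexHull]
    exact hspan
  have hfin : volume (convexHull ℝ ({α, β, ζ} : Set ℂ)) < ⊤ :=
    (((Set.finite_singleton ζ).insert β).insert α).isCompact_convexHull ℝ |>.measure_lt_top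
  -- the determinant bound
  have habs : |c₁ * c₂| < 1 := by
    have hcc : c₁ * c₂ = ((1 - t) * (1 - s)) / (t * s) := by
      rw [hc₁, hc₂]; field_simp
    have hts : 0 < t * s := mul_pos ht0 hs0
    rw [hcc, abs_of_nonneg (div_nonneg (mul_nonneg (by linarith) (by linarith)) hts.le)]
    rw [div_lt_one hts]
    nlinarith
  rw [hull_eq, hvolA, hdet]
  calc ENNReal.ofReal |c₁ * c₂| * volume (convexHull ℝ ({α, β, ζ} : Set ℂ))
      < 1 * volume (convexHull ℝ ({α, β, ζ} : Set ℂ)) := by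
        rw [ENNReal.mul_lt_mul_iff_left hpos.ne' hfin.ne]
        exact ENNReal.ofReal_lt_one.2 habs
    _ = volume (convexHull ℝ ({α, β, ζ} : Set ℂ)) := one_mul _
end

section
/- Let z_0, z_1, z_2, z_3 ∈ ℂ be four points such that the open segment from z_0 to z_2 and the open segment from z_1 to z_3 have a common point (i.e. the four points are in convex position with z_0z_2 and z_1z_3 the diagonals of the quadrilateral z_0z_1z_2z_3). Then for volume-almost every w ∈ ℂ: χ_{convexHull ℝ {z_0,z_1,z_3}}(w) + χ_{convexHull ℝ {z_1,z_2,z_3}}(w) = χ_{convexHull ℝ {z_0,z_1,z_2}}(w) + χ_{convexHull ℝ {z_0,z_2,z_3}}(w). Consequently, the sum of the standard measures of the two triangles of one triangulation of the quadrilateral equals the sum for the flipped triangulation. -/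
open MeasureTheory

lemma line_null (a b : ℂ) : volume ((affineSpan ℝ ({a,b} : Set ℂ) : AffineSubspace ℝ ℂ) : Set ℂ) = 0 := by
  apply Measure.addHaar_affineSubspace
  intro hT
  have hd : vectorSpan ℝ ({a,b} : Set ℂ) = ⊤ := by
    rw [← direction_affineSpan, hT]; exact AffineSubspace.direction_top ℝ ℂ ℂ
  rw [vectorSpan_pair] at hd
  have h1 : Complex.I * (a - b) ∈ Submodule.span ℝ {a -ᵥ b} := by rw [hd]; trivial
  obtain ⟨r, hr⟩ := Submodule.mem_span_singleton.mp h1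
  rw [vsub_eq_sub, Complex.real_smul] at hr
  rcases eq_or_ne a b with rfl | hab
  · simp at hd
  have hba : a - b ≠ 0 := sub_ne_zero.mpr hab
  have h2 : (r : ℂ) = Complex.I := mul_right_cancel₀ hba hr
  have := congrArg Complex.im h2
  simp at this

lemma mem_tri {a b c x : ℂ} :
    x ∈ convexHull ℝ ({a, b, c} : Set ℂ) ↔
      ∃ α β γ : ℝ, 0 ≤ α ∧ 0 ≤ β ∧ 0 ≤ γ ∧ α + β + γ = 1 ∧ α • a + β • b + γ • c = x := by
  rw [show ({a, b, c} : Set ℂ) = insert a {b, c} from rfl,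
    convexHull_insert ⟨b, by simp⟩, convexHull_pair, mem_convexJoin]
  constructor
  · rintro ⟨a', ha', y, ⟨u, v, hu, hv, huv, rfl⟩, p, q, hp, hq, hpq, rfl⟩
    rw [Set.mem_singleton_iff] at ha'; subst ha'
    exact ⟨p, q * u, q * v, hp, by positivity, by positivity,
      by nlinarith, by module⟩
  · rintro ⟨α, β, γ, hα, hβ, hγ, hsum, rfl⟩
    rcases eq_or_lt_of_le (by linarith : (0:ℝ) ≤ β + γ) with hq | hq
    · refine ⟨a, rfl, b, left_mem_segment ℝ b c, 1, 0, zero_le_one, le_refl 0, by ring, ?_⟩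
      have hβ0 : β = 0 := by linarith
      have hγ0 : γ = 0 := by linarith
      have hα1 : α = 1 := by linarith
      rw [hβ0, hγ0, hα1]; module
    · refine ⟨a, rfl, (β / (β + γ)) • b + (γ / (β + γ)) • c,
        ⟨β / (β + γ), γ / (β + γ), by positivity, by positivity, by field_simp, rfl⟩,
        α, β + γ, hα, hq.le, by linarith, ?_⟩
      have h0 : β + γ ≠ 0 := ne_of_gt hq
      rw [smul_add, smul_smul, smul_smul]
      rw [mul_div_cancel₀ _ h0, mul_div_cancel₀ _ h0]; module

noncomputable def cf (z₁ z₃ z : ℂ) : ℝ :=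
  (z.re - z₁.re) * (z₃.im - z₁.im) - (z.im - z₁.im) * (z₃.re - z₁.re)

lemma cf_combo (z₁ z₃ a b c : ℂ) (α β γ : ℝ) (hsum : α + β + γ = 1) :
    cf z₁ z₃ (α • a + β • b + γ • c) = α * cf z₁ z₃ a + β * cf z₁ z₃ b + γ * cf z₁ z₃ c := by
  simp only [cf, Complex.add_re, Complex.add_im, Complex.real_smul, Complex.mul_re,
    Complex.mul_im, Complex.ofReal_re, Complex.ofReal_im, zero_mul, mul_zero, sub_zero, add_zero]
  linear_combination (z₁.re * (z₃.im - z₁.im) - z₁.im * (z₃.re - z₁.re)) * hsum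

lemma cf_self₁ (z₁ z₃ : ℂ) : cf z₁ z₃ z₁ = 0 := by simp [cf]
lemma cf_self₃ (z₁ z₃ : ℂ) : cf z₁ z₃ z₃ = 0 := by simp [cf]; ring

lemma cf_eq_zero_mem (z₁ z₃ z : ℂ) (hne : z₁ ≠ z₃) (hz : cf z₁ z₃ z = 0) :
    z ∈ (affineSpan ℝ ({z₁, z₃} : Set ℂ) : Set ℂ) := by
  have hd : z₃ - z₁ ≠ 0 := sub_ne_zero.mpr (Ne.symm hne)
  have hd2 : (z₃ - z₁).re ≠ 0 ∨ (z₃ - z₁).im ≠ 0 := by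
    by_contra hc; push_neg at hc; exact hd (Complex.ext hc.1 hc.2)
  simp only [Complex.sub_re, Complex.sub_im] at hd2
  simp only [cf] at hz
  have key : ∃ r : ℝ, z - z₁ = r • (z₃ - z₁) := by
    rcases hd2 with h1 | h1
    · refine ⟨(z.re - z₁.re) / (z₃.re - z₁.re), ?_⟩
      apply Complex.ext <;>
        simp only [Complex.sub_re, Complex.sub_im, Complex.real_smul, Complex.mul_re,
          Complex.mul_im, Complex.ofReal_re, Complex.ofReal_im, zero_mul, mul_zero,
          sub_zero, add_zero, zero_add]
      · rw [div_mul_cancel₀ _ h1]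
      · rw [div_mul_eq_mul_div, eq_div_iff h1]; linear_combination -hz
    · refine ⟨(z.im - z₁.im) / (z₃.im - z₁.im), ?_⟩
      apply Complex.ext <;>
        simp only [Complex.sub_re, Complex.sub_im, Complex.real_smul, Complex.mul_re,
          Complex.mul_im, Complex.ofReal_re, Complex.ofReal_im, zero_mul, mul_zero,
          sub_zero, add_zero, zero_add]
      · rw [div_mul_eq_mul_div, eq_div_iff h1]; linear_combination hz
      · rw [div_mul_cancel₀ _ h1]
  obtain ⟨r, hr⟩ := key
  have : r • (z₃ -ᵥ z₁) +ᵥ z₁ = z := by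
    rw [vsub_eq_sub, vadd_eq_add, ← hr]; ring
  rw [← this]
  exact smul_vsub_vadd_mem_affineSpan_pair r z₁ z₃

lemma quad_cover {z₀ z₁ z₂ z₃ : ℂ}
    (h : (openSegment ℝ z₀ z₂ ∩ openSegment ℝ z₁ z₃).Nonempty) :
    convexHull ℝ ({z₀, z₁, z₂, z₃} : Set ℂ) ⊆
      convexHull ℝ ({z₀, z₁, z₃} : Set ℂ) ∪ convexHull ℝ ({z₁, z₂, z₃} : Set ℂ) := by
  obtain ⟨p, hp02, hp13⟩ := h
  obtain ⟨s, s', hs, hs', hss', hpeq⟩ := hp02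
  obtain ⟨t, t', ht, ht', htt', hqeq⟩ := hp13
  -- relation : s • z₀ + s' • z₂ = t • z₁ + t' • z₃
  have hrel : s • z₀ + s' • z₂ = t • z₁ + t' • z₃ := by rw [hpeq, hqeq]
  intro x hx
  rw [show ({z₀, z₁, z₂, z₃} : Set ℂ) = insert z₀ {z₁, z₂, z₃} from rfl,
    convexHull_insert ⟨z₁, by simp⟩, mem_convexJoin] at hx
  obtain ⟨a', ha', y, hy, p', q', hp', hq', hpq', rfl⟩ := hx
  rw [Set.mem_singleton_iff] at ha'
  rw [ha']
  obtain ⟨b₁, b₂, b₃, hb₁, hb₂, hb₃, hbsum, rfl⟩ := mem_tri.mp hy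
  -- x = a₀ • z₀ + a₁ • z₁ + a₂ • z₂ + a₃ • z₃
  set a₀ := p' with ha₀
  set a₁ := q' * b₁ with ha₁
  set a₂ := q' * b₂ with ha₂
  set a₃ := q' * b₃ with ha₃
  have hxeq : p' • z₀ + q' • (b₁ • z₁ + b₂ • z₂ + b₃ • z₃)
      = a₀ • z₀ + a₁ • z₁ + a₂ • z₂ + a₃ • z₃ := by module
  rw [hxeq]
  have ha₀' : 0 ≤ a₀ := hp'
  have ha₁' : 0 ≤ a₁ := by positivity
  have ha₂' : 0 ≤ a₂ := by positivity
  have ha₃' : 0 ≤ a₃ := by positivity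
  have hasum : a₀ + a₁ + a₂ + a₃ = 1 := by
    simp only [ha₀, ha₁, ha₂, ha₃]; nlinarith
  rcases le_or_gt (a₂ * s) (a₀ * s') with hc | hc
  · left
    rw [mem_tri]
    refine ⟨a₀ - a₂ * s / s', a₁ + a₂ * t / s', a₃ + a₂ * t' / s', ?_, ?_, ?_, ?_, ?_⟩
    · rw [sub_nonneg, div_le_iff₀ hs']; linarith
    · positivity
    · positivity
    · field_simp; ring_nf; nlinarith [hss', htt']
    · have : (a₂ / s') • (s • z₀ + s' • z₂) = (a₂ / s') • (t • z₁ + t' • z₃) := by rw [hrel]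
      have hs'0 : s' ≠ 0 := ne_of_gt hs'
      rw [smul_add, smul_add, smul_smul, smul_smul, smul_smul, smul_smul,
        div_mul_cancel₀ _ hs'0] at this
      have expand : (a₀ - a₂ * s / s') • z₀ + (a₁ + a₂ * t / s') • z₁ + (a₃ + a₂ * t' / s') • z₃
          = (a₀ • z₀ + a₁ • z₁ + a₂ • z₂ + a₃ • z₃)
            + ((a₂ / s' * t) • z₁ + (a₂ / s' * t') • z₃ - ((a₂ / s' * s) • z₀ + a₂ • z₂)) := by
        rw [show a₂ * s / s' = a₂ / s' * s by ring, show a₂ * t / s' = a₂ / s' * t by ring,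
          show a₂ * t' / s' = a₂ / s' * t' by ring]
        module
      rw [expand, ← this]
      module
  · right
    rw [mem_tri]
    refine ⟨a₁ + a₀ * t / s, a₂ - a₀ * s' / s, a₃ + a₀ * t' / s, ?_, ?_, ?_, ?_, ?_⟩
    · positivity
    · rw [sub_nonneg, div_le_iff₀ hs]; nlinarith
    · positivity
    · field_simp; ring_nf; nlinarith [hss', htt']
    · have : (a₀ / s) • (s • z₀ + s' • z₂) = (a₀ / s) • (t • z₁ + t' • z₃) := by rw [hrel]
      have hs0 : s ≠ 0 := ne_of_gt hs
      rw [smul_add, smul_add, smul_smul, smul_smul, smul_smul, smul_smul,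
        div_mul_cancel₀ _ hs0] at this
      have expand : (a₁ + a₀ * t / s) • z₁ + (a₂ - a₀ * s' / s) • z₂ + (a₃ + a₀ * t' / s) • z₃
          = (a₀ • z₀ + a₁ • z₁ + a₂ • z₂ + a₃ • z₃)
            + ((a₀ / s * t) • z₁ + (a₀ / s * t') • z₃ - (a₀ • z₀ + (a₀ / s * s') • z₂)) := by
        rw [show a₀ * s' / s = a₀ / s * s' by ring, show a₀ * t / s = a₀ / s * t by ring,
          show a₀ * t' / s = a₀ / s * t' by ring]
        module
      rw [expand, ← this]
      module


lemma tri_disj (z₀ z₁ z₂ z₃ : ℂ)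
    (h : (openSegment ℝ z₀ z₂ ∩ openSegment ℝ z₁ z₃).Nonempty)
    {w : ℂ} (hw13 : w ∉ (affineSpan ℝ ({z₁, z₃} : Set ℂ) : Set ℂ))
    (hw02 : w ∉ (affineSpan ℝ ({z₀, z₂} : Set ℂ) : Set ℂ)) :
    ¬(w ∈ convexHull ℝ ({z₀, z₁, z₃} : Set ℂ) ∧ w ∈ convexHull ℝ ({z₁, z₂, z₃} : Set ℂ)) := by
  rintro ⟨hA, hB⟩
  obtain ⟨p, hp02, hp13⟩ := h
  rcases eq_or_ne z₁ z₃ with rfl | hne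
  · -- degenerate : z₁ = z₃
    rw [openSegment_same, Set.mem_singleton_iff] at hp13
    subst hp13
    have hz₁ : p ∈ (affineSpan ℝ ({z₀, z₂} : Set ℂ) : Set ℂ) :=
      convexHull_subset_affineSpan _
        (by rw [convexHull_pair]; exact openSegment_subset_segment ℝ z₀ z₂ hp02)
    have hsub : ({z₀, p, p} : Set ℂ) ⊆ (affineSpan ℝ ({z₀, z₂} : Set ℂ) : Set ℂ) := by
      intro x hx
      rcases hx with rfl | rfl | rfl
      · exact subset_affineSpan ℝ _ (by simp)
      all_goals exact hz₁
    exact hw02 (convexHull_min hsub (affineSpan ℝ _).convex hA)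
  · obtain ⟨s, s', hs, hs', hss', hpeq⟩ := hp02
    obtain ⟨t, t', ht, ht', htt', hqeq⟩ := hp13
    have hfw : cf z₁ z₃ w ≠ 0 := fun h0 => hw13 (cf_eq_zero_mem _ _ _ hne h0)
    obtain ⟨α, β, γ, hα, hβ, hγ, hsumA, hAeq⟩ := mem_tri.mp hA
    obtain ⟨δ, ε, ζ, hδ, hε, hζ, hsumB, hBeq⟩ := mem_tri.mp hB
    have hwA : cf z₁ z₃ w = α * cf z₁ z₃ z₀ := by
      rw [← hAeq, cf_combo _ _ _ _ _ _ _ _ hsumA, cf_self₁, cf_self₃]; ring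
    have hwB : cf z₁ z₃ w = ε * cf z₁ z₃ z₂ := by
      rw [← hBeq, cf_combo _ _ _ _ _ _ _ _ hsumB, cf_self₁, cf_self₃]; ring
    have hp0 : cf z₁ z₃ p = 0 := by
      rw [← hqeq, show t • z₁ + t' • z₃ = t • z₁ + t' • z₃ + (0:ℝ) • z₃ by module,
        cf_combo _ _ _ _ _ _ _ _ (by linarith : t + t' + 0 = 1), cf_self₁, cf_self₃]; ring
    have hp1 : s * cf z₁ z₃ z₀ + s' * cf z₁ z₃ z₂ = 0 := by
      rw [← hp0, ← hpeq, show s • z₀ + s' • z₂ = s • z₀ + s' • z₂ + (0:ℝ) • z₂ by module,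
        cf_combo _ _ _ _ _ _ _ _ (by linarith : s + s' + 0 = 1)]; ring
    have hα0 : 0 < α := lt_of_le_of_ne hα (fun hc => hfw (by rw [hwA, ← hc, zero_mul]))
    have hε0 : 0 < ε := lt_of_le_of_ne hε (fun hc => hfw (by rw [hwB, ← hc, zero_mul]))
    have h1 : cf z₁ z₃ z₀ = cf z₁ z₃ w / α := by field_simp [hwA]; linarith
    have h2 : cf z₁ z₃ z₂ = cf z₁ z₃ w / ε := by field_simp [hwB]; linarith
    rw [h1, h2] at hp1
    have hkey : cf z₁ z₃ w * (s * ε + s' * α) = 0 := by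
      field_simp [ne_of_gt hα0, ne_of_gt hε0] at hp1
      linear_combination hp1
    have hpos : 0 < s * ε + s' * α := by positivity
    rcases mul_eq_zero.mp hkey with h0 | h0
    · exact hfw h0
    · exact absurd h0 (ne_of_gt hpos)

/-- If the open diagonals `z_0z_2` and `z_1z_3` of the quadrilateral
`z_0z_1z_2z_3` meet, then almost everywhere
`χ_{conv{z_0,z_1,z_3}} + χ_{conv{z_1,z_2,z_3}} = χ_{conv{z_0,z_1,z_2}} + χ_{conv{z_0,z_2,z_3}}`:
the two triangulations of the quadrilateral (a flip pair and its flipped pair) give the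
same polygonal measure. -/
theorem flip_pair_indicator_identity
    (z₀ z₁ z₂ z₃ : ℂ)
    (h : (openSegment ℝ z₀ z₂ ∩ openSegment ℝ z₁ z₃).Nonempty) :
    ∀ᵐ w : ℂ,
      (convexHull ℝ ({z₀, z₁, z₃} : Set ℂ)).indicator (fun _ => (1 : ℝ)) w
        + (convexHull ℝ ({z₁, z₂, z₃} : Set ℂ)).indicator (fun _ => (1 : ℝ)) w
      = (convexHull ℝ ({z₀, z₁, z₂} : Set ℂ)).indicator (fun _ => (1 : ℝ)) w
        + (convexHull ℝ ({z₀, z₂, z₃} : Set ℂ)).indicator (fun _ => (1 : ℝ)) w := by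
  have h' : (openSegment ℝ z₁ z₃ ∩ openSegment ℝ z₂ z₀).Nonempty := by
    obtain ⟨p, h1, h2⟩ := h
    exact ⟨p, h2, by rwa [openSegment_symm]⟩
  have hN : volume ((affineSpan ℝ ({z₁, z₃} : Set ℂ) : Set ℂ)
      ∪ (affineSpan ℝ ({z₀, z₂} : Set ℂ) : Set ℂ)) = 0 :=
    measure_union_null (line_null _ _) (line_null _ _)
  filter_upwards [measure_eq_zero_iff_ae_notMem.mp hN] with w hw
  rw [Set.mem_union] at hw
  push_neg at hw
  obtain ⟨hw13, hw02⟩ := hw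
  have hsub013 : convexHull ℝ ({z₀, z₁, z₃} : Set ℂ) ⊆
      convexHull ℝ ({z₀, z₁, z₂, z₃} : Set ℂ) :=
    convexHull_mono (by intro x hx; simp only [Set.mem_insert_iff, Set.mem_singleton_iff] at hx ⊢; tauto)
  have hsub123 : convexHull ℝ ({z₁, z₂, z₃} : Set ℂ) ⊆
      convexHull ℝ ({z₀, z₁, z₂, z₃} : Set ℂ) :=
    convexHull_mono (by intro x hx; simp only [Set.mem_insert_iff, Set.mem_singleton_iff] at hx ⊢; tauto)
  have hsub012 : convexHull ℝ ({z₀, z₁, z₂} : Set ℂ) ⊆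
      convexHull ℝ ({z₀, z₁, z₂, z₃} : Set ℂ) :=
    convexHull_mono (by intro x hx; simp only [Set.mem_insert_iff, Set.mem_singleton_iff] at hx ⊢; tauto)
  have hsub023 : convexHull ℝ ({z₀, z₂, z₃} : Set ℂ) ⊆
      convexHull ℝ ({z₀, z₁, z₂, z₃} : Set ℂ) :=
    convexHull_mono (by intro x hx; simp only [Set.mem_insert_iff, Set.mem_singleton_iff] at hx ⊢; tauto)
  by_cases hQ : w ∈ convexHull ℝ ({z₀, z₁, z₂, z₃} : Set ℂ)
  · have hL := quad_cover h hQ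
    have e1 : ({z₁, z₂, z₃, z₀} : Set ℂ) = {z₀, z₁, z₂, z₃} := by ext x; simp; tauto
    have e2 : ({z₁, z₂, z₀} : Set ℂ) = {z₀, z₁, z₂} := by ext x; simp; tauto
    have e3 : ({z₂, z₃, z₀} : Set ℂ) = {z₀, z₂, z₃} := by ext x; simp; tauto
    have e4 : ({z₂, z₀} : Set ℂ) = {z₀, z₂} := Set.pair_comm _ _
    have hR : w ∈ convexHull ℝ ({z₀, z₁, z₂} : Set ℂ) ∪ convexHull ℝ ({z₀, z₂, z₃} : Set ℂ) := by
      have := quad_cover h' (by rw [e1]; exact hQ)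
      rwa [e2, e3] at this
    have hdL := tri_disj z₀ z₁ z₂ z₃ h hw13 hw02
    have hdR : ¬(w ∈ convexHull ℝ ({z₀, z₁, z₂} : Set ℂ)
        ∧ w ∈ convexHull ℝ ({z₀, z₂, z₃} : Set ℂ)) := by
      have := tri_disj z₁ z₂ z₃ z₀ h' (by rw [e4]; exact hw02) hw13
      rwa [e2, e3] at this
    have eL : (convexHull ℝ ({z₀, z₁, z₃} : Set ℂ)).indicator (fun _ => (1 : ℝ)) w
        + (convexHull ℝ ({z₁, z₂, z₃} : Set ℂ)).indicator (fun _ => (1 : ℝ)) w = 1 := by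
      rcases hL with hl | hl
      · rw [Set.indicator_of_mem hl, Set.indicator_of_notMem (fun hc => hdL ⟨hl, hc⟩)]; ring
      · rw [Set.indicator_of_notMem (fun hc => hdL ⟨hc, hl⟩), Set.indicator_of_mem hl]; ring
    have eR : (convexHull ℝ ({z₀, z₁, z₂} : Set ℂ)).indicator (fun _ => (1 : ℝ)) w
        + (convexHull ℝ ({z₀, z₂, z₃} : Set ℂ)).indicator (fun _ => (1 : ℝ)) w = 1 := by
      rcases hR with hr | hr
      · rw [Set.indicator_of_mem hr, Set.indicator_of_notMem (fun hc => hdR ⟨hr, hc⟩)]; ring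
      · rw [Set.indicator_of_notMem (fun hc => hdR ⟨hc, hr⟩), Set.indicator_of_mem hr]; ring
    rw [eL, eR]
  · rw [Set.indicator_of_notMem (fun hc => hQ (hsub013 hc)),
      Set.indicator_of_notMem (fun hc => hQ (hsub123 hc)),
      Set.indicator_of_notMem (fun hc => hQ (hsub012 hc)),
      Set.indicator_of_notMem (fun hc => hQ (hsub023 hc))]
end
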